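/- arXiv:2605.20272 — 2 statements merged into one kernel-verified Lean document; each statement's English description precedes it below -/
import Mathlib

section
/- Performance loss under successor-weighted model reductions: let M be an MDP on ℕ with finite action set 𝒜, discount γ ∈ [0,1), rewards r(s,a) ∈ [0, Rmax], Vmax = Rmax/(1−γ). Let φ : ℕ → S_φ be a state abstraction with S_φ finite, let (r_φ, P_φ) be an abstract MDP on S_φ with rewards in [0, Rmax], let g be the fixed point g(x,a) = r_φ(x,a) + γ ∑_{x'} P_φ((x,a),x') max_{a'} g(x',a'), and let the abstract policy π^φ be deterministic greedy with π^φ(s) ∈ argmax_a g(φ(s),a). Then for any policy π (in particular an optimal policy of M) and any start probability vector d₀: J(π, d₀) − J(π^φ, d₀) ≤ (1/(1−γ)) ∑_{d ∈ {d^π, d^{π^φ}}} ( ‖ε_r^φ‖_d + (γ/2) Vmax ‖ε_p^φ‖_d ), where ε_r^φ := r − Φ↓r_φ and ε_p^φ := Φ↑p − Φ↓P_φ are the reward and transition approximation errors, d^π and d^{π^φ} are the normalized state-action successor representations of π and π^φ started from d₀, ‖f‖_d := ∑_{s,a} d(s,a)|f(s,a)|, and ‖Q‖_d := ∑_{s,a}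 d(s,a) ∑_{x∈S_φ} |Q((s,a),x)|. -/
private lemma row_summable {d : ℕ → ℝ} (hd0 : ∀ s, 0 ≤ d s) (hd1 : HasSum d 1)
    {e : ℕ → ℝ} {C : ℝ} (he : ∀ s, |e s| ≤ C) :
    Summable (fun s => d s * e s) := by
  refine summable_abs_iff.mp (Summable.of_nonneg_of_le (fun s => abs_nonneg _) (fun s => ?_)
    (hd1.summable.mul_right C))
  rw [abs_mul, abs_of_nonneg (hd0 s)]
  exact mul_le_mul_of_nonneg_left (he s) (hd0 s)

private lemma row_bound {d : ℕ → ℝ} (hd0 : ∀ s, 0 ≤ d s) (hd1 : HasSum d 1)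
    {e : ℕ → ℝ} {C : ℝ} (he : ∀ s, |e s| ≤ C) :
    |∑' s, d s * e s| ≤ C := by
  have hC : 0 ≤ C := le_trans (abs_nonneg _) (he 0)
  have hsum := row_summable hd0 hd1 he
  have hCsum : Summable (fun s => d s * C) := hd1.summable.mul_right C
  have htop : ∑' s, d s * e s ≤ C := by
    calc ∑' s, d s * e s ≤ ∑' s, d s * C := by
          refine Summable.tsum_le_tsum (fun s => mul_le_mul_of_nonneg_left
            (le_trans (le_abs_self _) (he s)) (hd0 s)) hsum hCsum
      _ = C := by rw [tsum_mul_right, hd1.tsum_eq, one_mul]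
  have hbot : -C ≤ ∑' s, d s * e s := by
    have : ∑' s, d s * (-C) ≤ ∑' s, d s * e s := by
      refine Summable.tsum_le_tsum (fun s => mul_le_mul_of_nonneg_left ?_ (hd0 s)) (hd1.summable.mul_right _) hsum
      exact neg_le_of_abs_le (he s)
    calc -C = ∑' s, d s * (-C) := by rw [tsum_mul_right, hd1.tsum_eq, one_mul]
      _ ≤ _ := this
  exact abs_le.2 ⟨hbot, htop⟩

private lemma geom_summable {γ : ℝ} (hγ0 : 0 ≤ γ) (hγ1 : γ < 1)
    {u : ℕ → ℝ} {C : ℝ} (hu : ∀ t, |u t| ≤ C) :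
    Summable fun t => γ^t * u t := by
  refine summable_abs_iff.mp (Summable.of_nonneg_of_le (fun t => abs_nonneg _) (fun t => ?_)
    ((summable_geometric_of_lt_one hγ0 hγ1).mul_right C))
  rw [abs_mul, abs_of_nonneg (pow_nonneg hγ0 t)]
  exact mul_le_mul_of_nonneg_left (hu t) (pow_nonneg hγ0 t)

set_option maxHeartbeats 1000000 in
private lemma mass_step {q : ℕ → ℕ → ℝ} (hq0 : ∀ s s', 0 ≤ q s s') (hq1 : ∀ s, HasSum (q s) 1)
    {d : ℕ → ℝ} (hd0 : ∀ s, 0 ≤ d s) (hd1 : HasSum d 1) :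
    HasSum (fun s' => ∑' s, d s * q s s') 1 := by
  have hq1' : ∀ s s', q s s' ≤ 1 := fun s s' => le_hasSum (hq1 s) s' (fun j _ => hq0 s j)
  have hrow : ∀ s, (∑' s', d s * q s s') = d s := by
    intro s; rw [tsum_mul_left, (hq1 s).tsum_eq, mul_one]
  have hnn : ∀ p : ℕ × ℕ, 0 ≤ d p.1 * q p.1 p.2 := fun p => mul_nonneg (hd0 _) (hq0 _ _)
  have h1 : ∀ x : ℕ, Summable fun y => d x * q x y := fun x => ((hq1 x).summable).mul_left (d x)
  have h2 : Summable fun x : ℕ => ∑' y, d x * q x y := by simpa only [hrow] using hd1.summable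
  have hF : Summable (fun p : ℕ × ℕ => d p.1 * q p.1 p.2) :=
    (summable_prod_of_nonneg hnn).2 ⟨h1, h2⟩
  have hnnG : ∀ p : ℕ × ℕ, 0 ≤ d p.2 * q p.2 p.1 := fun p => mul_nonneg (hd0 _) (hq0 _ _)
  have hG : Summable (fun p : ℕ × ℕ => d p.2 * q p.2 p.1) := by
    have := hF.prod_symm
    simpa [Prod.swap] using this
  have hmarg : Summable (fun s' => ∑' s, d s * q s s') :=
    ((summable_prod_of_nonneg hnnG).1 hG).2
  have h3 : ∀ s' : ℕ, Summable fun s => d s * q s s' := by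
    intro s'
    refine Summable.of_nonneg_of_le (fun s => mul_nonneg (hd0 _) (hq0 _ _)) (fun s => ?_) hd1.summable
    calc d s * q s s' ≤ d s * 1 := mul_le_mul_of_nonneg_left (hq1' s s') (hd0 s)
      _ = d s := mul_one _
  have hcomm : ∑' s', ∑' s, d s * q s s' = ∑' s, ∑' s', d s * q s s' :=
    Summable.tsum_comm' hF h1 h3
  refine hmarg.hasSum_iff.2 ?_
  rw [hcomm]
  simp only [hrow]
  exact hd1.tsum_eq

set_option maxHeartbeats 1000000 in
private lemma swap_ts {γ : ℝ} (hγ0 : 0 ≤ γ) (hγ1 : γ < 1)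
    {d : ℕ → ℕ → ℝ} (hd0 : ∀ t s, 0 ≤ d t s) (hd1 : ∀ t, HasSum (d t) 1)
    {e : ℕ → ℝ} {C : ℝ} (he0 : ∀ s, 0 ≤ e s) (he1 : ∀ s, e s ≤ C) :
    (∑' t, γ^t * ∑' s, d t s * e s) = (∑' s, (∑' t : ℕ, γ^t * d t s) * e s)
      ∧ Summable (fun s => ∑' t : ℕ, γ^t * d t s) := by
  have hC : 0 ≤ C := le_trans (he0 0) (he1 0)
  have heabs : ∀ s, |e s| ≤ C := fun s => by rw [abs_of_nonneg (he0 s)]; exact he1 s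
  have hds1 : ∀ t s, d t s ≤ 1 := fun t s => le_hasSum (hd1 t) s (fun j _ => hd0 t j)
  have hnn : ∀ p : ℕ × ℕ, 0 ≤ γ^p.1 * (d p.1 p.2 * e p.2) :=
    fun p => mul_nonneg (pow_nonneg hγ0 _) (mul_nonneg (hd0 _ _) (he0 _))
  have h1 : ∀ t : ℕ, Summable fun s => γ^t * (d t s * e s) :=
    fun t => (row_summable (hd0 t) (hd1 t) heabs).mul_left (γ^t)
  have hrow : ∀ t : ℕ, (∑' s, γ^t * (d t s * e s)) = γ^t * ∑' s, d t s * e s :=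
    fun t => tsum_mul_left
  have h2 : Summable fun t : ℕ => ∑' s, γ^t * (d t s * e s) := by
    simp only [hrow]
    exact geom_summable hγ0 hγ1 (fun t => row_bound (hd0 t) (hd1 t) heabs)
  have hF : Summable (fun p : ℕ × ℕ => γ^p.1 * (d p.1 p.2 * e p.2)) :=
    (summable_prod_of_nonneg hnn).2 ⟨h1, h2⟩
  have h3 : ∀ s : ℕ, Summable fun t => γ^t * (d t s * e s) := by
    intro s
    refine Summable.of_nonneg_of_le
      (fun t => mul_nonneg (pow_nonneg hγ0 _) (mul_nonneg (hd0 _ _) (he0 _))) (fun t => ?_)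
      ((summable_geometric_of_lt_one hγ0 hγ1).mul_right C)
    refine mul_le_mul_of_nonneg_left ?_ (pow_nonneg hγ0 t)
    calc d t s * e s ≤ 1 * C :=
          mul_le_mul (hds1 t s) (he1 s) (he0 s) zero_le_one
      _ = C := one_mul _
  have hcomm : ∑' s, ∑' t, γ^t * (d t s * e s) = ∑' t, ∑' s, γ^t * (d t s * e s) :=
    Summable.tsum_comm' hF h1 h3
  constructor
  · calc (∑' t, γ^t * ∑' s, d t s * e s) = ∑' t, ∑' s, γ^t * (d t s * e s) := by
          simp only [hrow]
      _ = ∑' s, ∑' t, γ^t * (d t s * e s) := hcomm.symm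
      _ = ∑' s, (∑' t : ℕ, γ^t * d t s) * e s := by
          refine tsum_congr fun s => ?_
          rw [← tsum_mul_right]
          exact tsum_congr fun t => (mul_assoc _ _ _).symm
  · have hnn1 : ∀ p : ℕ × ℕ, 0 ≤ γ^p.1 * d p.1 p.2 :=
      fun p => mul_nonneg (pow_nonneg hγ0 _) (hd0 _ _)
    have h1' : ∀ t : ℕ, Summable fun s => γ^t * d t s :=
      fun t => ((hd1 t).summable).mul_left (γ^t)
    have hrow1 : ∀ t : ℕ, (∑' s, γ^t * d t s) = γ^t := by
      intro t; rw [tsum_mul_left, (hd1 t).tsum_eq, mul_one]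
    have h2' : Summable fun t : ℕ => ∑' s, γ^t * d t s := by
      simp only [hrow1]; exact summable_geometric_of_lt_one hγ0 hγ1
    have hF1 : Summable (fun p : ℕ × ℕ => γ^p.1 * d p.1 p.2) :=
      (summable_prod_of_nonneg hnn1).2 ⟨h1', h2'⟩
    have hG1 : Summable (fun p : ℕ × ℕ => γ^p.2 * d p.2 p.1) := by
      have := hF1.prod_symm
      simpa [Prod.swap] using this
    have hnnG1 : ∀ p : ℕ × ℕ, 0 ≤ γ^p.2 * d p.2 p.1 :=
      fun p => mul_nonneg (pow_nonneg hγ0 _) (hd0 _ _)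
    exact ((summable_prod_of_nonneg hnnG1).1 hG1).2

set_option maxHeartbeats 1000000 in
private lemma mono_ts {γ : ℝ} (hγ0 : 0 ≤ γ) (hγ1 : γ < 1)
    {d : ℕ → ℕ → ℝ} (hd0 : ∀ t s, 0 ≤ d t s) (hd1 : ∀ t, HasSum (d t) 1)
    {f e : ℕ → ℝ} {C : ℝ} (hfe : ∀ s, f s ≤ e s)
    (hf : ∀ s, |f s| ≤ C) (he : ∀ s, |e s| ≤ C) :
    (∑' t, γ^t * ∑' s, d t s * f s) ≤ (∑' t, γ^t * ∑' s, d t s * e s) := by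
  refine Summable.tsum_le_tsum (fun t => ?_) (geom_summable hγ0 hγ1
    (fun t => row_bound (hd0 t) (hd1 t) hf)) (geom_summable hγ0 hγ1
    (fun t => row_bound (hd0 t) (hd1 t) he))
  refine mul_le_mul_of_nonneg_left ?_ (pow_nonneg hγ0 t)
  exact Summable.tsum_le_tsum (fun s => mul_le_mul_of_nonneg_left (hfe s) (hd0 t s))
    (row_summable (hd0 t) (hd1 t) hf) (row_summable (hd0 t) (hd1 t) he)

set_option maxHeartbeats 1600000 in
private lemma policy_bound {γ : ℝ} (hγ0 : 0 ≤ γ) (hγ1 : γ < 1)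
    {q : ℕ → ℕ → ℝ} (hq0 : ∀ s s', 0 ≤ q s s') (hq1 : ∀ s, HasSum (q s) 1)
    {R : ℕ → ℝ} {Rb : ℝ} (hR0 : ∀ s, 0 ≤ R s) (hR1 : ∀ s, R s ≤ Rb)
    {V : ℕ → ℝ} {Vb : ℝ} (hV0 : ∀ s, 0 ≤ V s) (hV1 : ∀ s, V s ≤ Vb)
    {d₀ : ℕ → ℝ} (hd₀0 : ∀ i, 0 ≤ d₀ i) (hd₀1 : HasSum d₀ 1)
    {d : ℕ → ℕ → ℝ} (hd0 : d 0 = d₀)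
    (hdrec : ∀ t s', d (t+1) s' = ∑' s, d t s * q s s') :
    (∀ t s, 0 ≤ d t s) ∧ (∀ t, HasSum (d t) 1) ∧
    ((∑' t, γ^t * ∑' s, d t s * R s)
      = (∑' s, d₀ s * V s)
        + ∑' t, γ^t * ∑' s, d t s * (R s + γ * (∑' s', q s s' * V s') - V s)) := by
  have hVb : 0 ≤ Vb := le_trans (hV0 0) (hV1 0)
  have hRb : 0 ≤ Rb := le_trans (hR0 0) (hR1 0)
  have hVabs : ∀ s, |V s| ≤ Vb := fun s => by rw [abs_of_nonneg (hV0 s)]; exact hV1 s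
  have hRabs : ∀ s, |R s| ≤ Rb := fun s => by rw [abs_of_nonneg (hR0 s)]; exact hR1 s
  have hq1' : ∀ s s', q s s' ≤ 1 := fun s s' => le_hasSum (hq1 s) s' (fun j _ => hq0 s j)
  -- nonnegativity and mass
  have hdnn : ∀ t s, 0 ≤ d t s := by
    intro t
    induction t with
    | zero => intro s; rw [hd0]; exact hd₀0 s
    | succ t ih =>
        intro s'
        rw [hdrec]
        exact tsum_nonneg fun s => mul_nonneg (ih s) (hq0 s s')
  have hdhs : ∀ t, HasSum (d t) 1 := by
    intro t
    induction t with
    | zero => rw [hd0]; exact hd₀1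
    | succ t ih =>
        have heq : d (t+1) = fun s' => ∑' s, d t s * q s s' := funext (hdrec t)
        rw [heq]
        exact mass_step hq0 hq1 (hdnn t) ih
  refine ⟨hdnn, hdhs, ?_⟩
  -- the expected next-state value
  set Pq : ℕ → ℝ := fun s => ∑' s', q s s' * V s' with hPqdef
  have hqV : ∀ s, Summable fun s' => q s s' * V s' := by
    intro s
    refine Summable.of_nonneg_of_le (fun s' => mul_nonneg (hq0 _ _) (hV0 _)) (fun s' => ?_)
      (((hq1 s).summable).mul_right Vb)
    exact mul_le_mul_of_nonneg_left (hV1 s') (hq0 s s')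
  have hPq0 : ∀ s, 0 ≤ Pq s := fun s => tsum_nonneg fun s' => mul_nonneg (hq0 _ _) (hV0 _)
  have hPq1 : ∀ s, Pq s ≤ Vb := by
    intro s
    calc Pq s ≤ ∑' s', q s s' * Vb := by
          refine Summable.tsum_le_tsum (fun s' => mul_le_mul_of_nonneg_left (hV1 s') (hq0 s s'))
            (hqV s) (((hq1 s).summable).mul_right Vb)
      _ = Vb := by rw [tsum_mul_right, (hq1 s).tsum_eq, one_mul]
  have hPqabs : ∀ s, |Pq s| ≤ Vb := fun s => by rw [abs_of_nonneg (hPq0 s)]; exact hPq1 s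
  -- step identity for the value sequence
  have hVstep : ∀ t, (∑' s', d (t+1) s' * V s') = ∑' s, d t s * Pq s := by
    intro t
    have hnn : ∀ p : ℕ × ℕ, 0 ≤ d t p.1 * (q p.1 p.2 * V p.2) :=
      fun p => mul_nonneg (hdnn t _) (mul_nonneg (hq0 _ _) (hV0 _))
    have h1 : ∀ s : ℕ, Summable fun s' => d t s * (q s s' * V s') :=
      fun s => (hqV s).mul_left (d t s)
    have hrow : ∀ s, (∑' s', d t s * (q s s' * V s')) = d t s * Pq s :=
      fun s => tsum_mul_left
    have h2 : Summable fun s : ℕ => ∑' s', d t s * (q s s' * V s') := by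
      simp only [hrow]
      exact row_summable (hdnn t) (hdhs t) hPqabs
    have hF : Summable (fun p : ℕ × ℕ => d t p.1 * (q p.1 p.2 * V p.2)) :=
      (summable_prod_of_nonneg hnn).2 ⟨h1, h2⟩
    have h3 : ∀ s' : ℕ, Summable fun s => d t s * (q s s' * V s') := by
      intro s'
      refine Summable.of_nonneg_of_le (fun s => mul_nonneg (hdnn t _)
        (mul_nonneg (hq0 _ _) (hV0 _))) (fun s => ?_) ((hdhs t).summable.mul_right Vb)
      refine mul_le_mul_of_nonneg_left ?_ (hdnn t s)
      calc q s s' * V s' ≤ 1 * Vb :=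
            mul_le_mul (hq1' s s') (hV1 s') (hV0 s') zero_le_one
        _ = Vb := one_mul _
    have hcomm : ∑' s', ∑' s, d t s * (q s s' * V s')
        = ∑' s, ∑' s', d t s * (q s s' * V s') := Summable.tsum_comm' hF h1 h3
    calc (∑' s', d (t+1) s' * V s') = ∑' s', (∑' s, d t s * q s s') * V s' := by
          refine tsum_congr fun s' => ?_; rw [hdrec]
      _ = ∑' s', ∑' s, d t s * (q s s' * V s') := by
          refine tsum_congr fun s' => ?_
          rw [← tsum_mul_right]
          exact tsum_congr fun s => mul_assoc _ _ _
      _ = ∑' s, ∑' s', d t s * (q s s' * V s') := hcomm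
      _ = ∑' s, d t s * Pq s := by simp only [hrow]
  -- decomposition of the per-step sum
  have hsumR : ∀ t, Summable fun s => d t s * R s :=
    fun t => row_summable (hdnn t) (hdhs t) hRabs
  have hsumV : ∀ t, Summable fun s => d t s * V s :=
    fun t => row_summable (hdnn t) (hdhs t) hVabs
  have hsumPq : ∀ t, Summable fun s => d t s * Pq s :=
    fun t => row_summable (hdnn t) (hdhs t) hPqabs
  have hDt : ∀ t, (∑' s, d t s * (R s + γ * Pq s - V s))
      = (∑' s, d t s * R s) + γ * (∑' s, d t s * Pq s) - (∑' s, d t s * V s) := by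
    intro t
    have h1 : (fun s => d t s * (R s + γ * Pq s - V s))
        = fun s => (d t s * R s + γ * (d t s * Pq s)) - d t s * V s := by
      funext s; ring
    rw [h1, Summable.tsum_sub (((hsumR t).add ((hsumPq t).mul_left γ))) (hsumV t),
      Summable.tsum_add (hsumR t) ((hsumPq t).mul_left γ), tsum_mul_left]
  -- bounded sequences
  have hJabs : ∀ t, |∑' s, d t s * R s| ≤ Rb :=
    fun t => row_bound (hdnn t) (hdhs t) hRabs
  have hVtabs : ∀ t, |∑' s, d t s * V s| ≤ Vb :=
    fun t => row_bound (hdnn t) (hdhs t) hVabs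
  have hPtabs : ∀ t, |∑' s, d t s * Pq s| ≤ Vb :=
    fun t => row_bound (hdnn t) (hdhs t) hPqabs
  have hDabs : ∀ t, |∑' s, d t s * (R s + γ * Pq s - V s)| ≤ Rb + (Vb + Vb) := by
    intro t
    rw [hDt t]
    have h1 := hJabs t; have h2 := hVtabs t; have h3 := hPtabs t
    have h4 : |γ * (∑' s, d t s * Pq s)| ≤ Vb := by
      rw [abs_mul, abs_of_nonneg hγ0]
      calc γ * |∑' s, d t s * Pq s| ≤ 1 * Vb :=
            mul_le_mul hγ1.le h3 (abs_nonneg _) zero_le_one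
        _ = Vb := one_mul _
    calc |(∑' s, d t s * R s) + γ * (∑' s, d t s * Pq s) - (∑' s, d t s * V s)|
        ≤ |(∑' s, d t s * R s) + γ * (∑' s, d t s * Pq s)| + |∑' s, d t s * V s| :=
          abs_sub _ _
      _ ≤ (|∑' s, d t s * R s| + |γ * (∑' s, d t s * Pq s)|) + |∑' s, d t s * V s| := by
          gcongr; exact abs_add_le _ _
      _ ≤ Rb + (Vb + Vb) := by linarith
  -- telescoping
  set u : ℕ → ℝ := fun t => γ^t * ∑' s, d t s * V s with hudef
  have hu : Summable u := geom_summable hγ0 hγ1 hVtabs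
  have hushift : Summable fun t => u (t+1) := (summable_nat_add_iff 1).2 hu
  have hper : ∀ t, γ^t * (∑' s, d t s * R s)
      = γ^t * (∑' s, d t s * (R s + γ * Pq s - V s)) + (u t - u (t+1)) := by
    intro t
    rw [hDt t, hudef]
    simp only []
    rw [hVstep t]
    ring
  have hsumD : Summable fun t => γ^t * (∑' s, d t s * (R s + γ * Pq s - V s)) :=
    geom_summable hγ0 hγ1 hDabs
  have htel : (∑' t, (u t - u (t+1))) = u 0 := by
    rw [Summable.tsum_sub hu hushift]
    have := Summable.tsum_eq_zero_add hu
    linarith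
  calc (∑' t, γ^t * ∑' s, d t s * R s)
      = ∑' t, (γ^t * (∑' s, d t s * (R s + γ * Pq s - V s)) + (u t - u (t+1))) :=
        tsum_congr hper
    _ = (∑' t, γ^t * (∑' s, d t s * (R s + γ * Pq s - V s))) + ∑' t, (u t - u (t+1)) :=
        Summable.tsum_add hsumD (hu.sub hushift)
    _ = (∑' s, d₀ s * V s) + ∑' t, γ^t * ∑' s, d t s * (R s + γ * Pq s - V s) := by
        rw [htel, hudef]
        simp only [pow_zero, one_mul, hd0]
        ring

private lemma kernel_val_bounds {q : ℕ → ℝ} (hq0 : ∀ s', 0 ≤ q s') (hq1 : HasSum q 1)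
    {V : ℕ → ℝ} {Vb : ℝ} (hV0 : ∀ s, 0 ≤ V s) (hV1 : ∀ s, V s ≤ Vb) :
    0 ≤ (∑' s', q s' * V s') ∧ (∑' s', q s' * V s') ≤ Vb := by
  have hsum : Summable fun s' => q s' * V s' := by
    refine Summable.of_nonneg_of_le (fun s' => mul_nonneg (hq0 _) (hV0 _)) (fun s' => ?_)
      (hq1.summable.mul_right Vb)
    exact mul_le_mul_of_nonneg_left (hV1 s') (hq0 s')
  refine ⟨tsum_nonneg fun s' => mul_nonneg (hq0 _) (hV0 _), ?_⟩
  calc (∑' s', q s' * V s') ≤ ∑' s', q s' * Vb := by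
        refine Summable.tsum_le_tsum (fun s' => mul_le_mul_of_nonneg_left (hV1 s') (hq0 s'))
          hsum (hq1.summable.mul_right Vb)
    _ = Vb := by rw [tsum_mul_right, hq1.tsum_eq, one_mul]

/-- Performance loss under successor-weighted model reductions: the gap between the
return of any policy `π` and the return of the greedy abstract policy `πφ` (greedy
with respect to the optimal fixed point `g` of the abstract MDP `(rφ, Pφ)`) is
bounded by the reward and transition approximation errors of the abstraction,
measured in the successor-representation-weighted norms of both policies. Here
`dπ t` (resp. `dφ t`) is the state distribution at time `t+1` under `π`
(resp. `πφ`), both started from `d₀`. -/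
theorem stmt14 {𝒜 Sφ : Type*} [Fintype 𝒜] [Nonempty 𝒜] [DecidableEq 𝒜]
    [Fintype Sφ] [DecidableEq Sφ]
    (γ Rmax Vmax : ℝ) (hγ0 : 0 ≤ γ) (hγ1 : γ < 1) (hR : 0 ≤ Rmax)
    (hV : Vmax = Rmax / (1 - γ))
    (r : ℕ → 𝒜 → ℝ) (hr : ∀ s a, r s a ∈ Set.Icc (0:ℝ) Rmax)
    (p : ℕ → 𝒜 → ℕ → ℝ)
    (hp0 : ∀ s a j, 0 ≤ p s a j) (hp1 : ∀ s a, HasSum (p s a) 1)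
    (φ : ℕ → Sφ)
    (rφ : Sφ → 𝒜 → ℝ) (hrφ : ∀ x a, rφ x a ∈ Set.Icc (0:ℝ) Rmax)
    (Pφ : Sφ → 𝒜 → Sφ → ℝ)
    (hPφ0 : ∀ x a x', 0 ≤ Pφ x a x') (hPφ1 : ∀ x a, ∑ x', Pφ x a x' = 1)
    (g : Sφ → 𝒜 → ℝ)
    (hg : ∀ x a, g x a = rφ x a + γ * ∑ x', Pφ x a x' *
        (Finset.univ.sup' Finset.univ_nonempty fun a' => g x' a'))
    (πφ : ℕ → 𝒜) (hgreedy : ∀ s a, g (φ s) a ≤ g (φ s) (πφ s))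
    (π : ℕ → 𝒜 → ℝ) (hπ0 : ∀ s a, 0 ≤ π s a) (hπ1 : ∀ s, ∑ a, π s a = 1)
    (d₀ : ℕ → ℝ) (hd₀0 : ∀ i, 0 ≤ d₀ i) (hd₀1 : HasSum d₀ 1)
    (dπ : ℕ → ℕ → ℝ) (hdπ0 : dπ 0 = d₀)
    (hdπrec : ∀ t s', dπ (t+1) s' = ∑' s, dπ t s * ∑ a, π s a * p s a s')
    (dφ : ℕ → ℕ → ℝ) (hdφ0 : dφ 0 = d₀)
    (hdφrec : ∀ t s', dφ (t+1) s' = ∑' s, dφ t s * p s (πφ s) s') :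
    (∑' t, γ^t * ∑' s, dπ t s * ∑ a, π s a * r s a)
        - (∑' t, γ^t * ∑' s, dφ t s * r s (πφ s))
      ≤ (1 / (1 - γ)) *
        (((∑' s, ∑ a, ((1 - γ) * ∑' t, γ^t * (dπ t s * π s a)) *
              |r s a - rφ (φ s) a|)
            + (γ/2) * Vmax *
              (∑' s, ∑ a, ((1 - γ) * ∑' t, γ^t * (dπ t s * π s a)) *
                ∑ x : Sφ, |(∑' j, if φ j = x then p s a j else 0) - Pφ (φ s) a x|))
          + ((∑' s, ∑ a, ((1 - γ) * ∑' t, γ^t *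
                  (dφ t s * (if a = πφ s then (1:ℝ) else 0))) *
              |r s a - rφ (φ s) a|)
            + (γ/2) * Vmax *
              (∑' s, ∑ a, ((1 - γ) * ∑' t, γ^t *
                  (dφ t s * (if a = πφ s then (1:ℝ) else 0))) *
                ∑ x : Sφ, |(∑' j, if φ j = x then p s a j else 0) - Pφ (φ s) a x|))) := by
  haveI : Nonempty Sφ := ⟨φ 0⟩
  have h1γ : (0:ℝ) < 1 - γ := by linarith
  have hVmax0 : 0 ≤ Vmax := hV ▸ div_nonneg hR (le_of_lt h1γ)
  classical
  -- the optimal abstract value function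
  set Vb : Sφ → ℝ := fun x => Finset.univ.sup' Finset.univ_nonempty (fun a' => g x a')
    with hVbdef
  have hgVb : ∀ x a, g x a = rφ x a + γ * ∑ x', Pφ x a x' * Vb x' := by
    intro x a; simp only [hVbdef]; exact hg x a
  have hgle : ∀ x a, g x a ≤ Vb x := by
    intro x a; simp only [hVbdef]
    exact Finset.le_sup' (fun a' => g x a') (Finset.mem_univ a)
  have hVble : ∀ (x : Sφ) (c : ℝ), (∀ a, g x a ≤ c) → Vb x ≤ c := by
    intro x c h; simp only [hVbdef]; exact Finset.sup'_le _ _ fun a _ => h a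
  -- bounds on Vb
  obtain ⟨m0, -, hmax⟩ := Finset.exists_max_image (Finset.univ : Finset (Sφ × 𝒜))
    (fun pr => g pr.1 pr.2) Finset.univ_nonempty
  have hmax' : ∀ x a, g x a ≤ g m0.1 m0.2 := fun x a => hmax (x, a) (Finset.mem_univ _)
  have hVbM : ∀ x, Vb x ≤ g m0.1 m0.2 := fun x => hVble x _ (fun a => hmax' x a)
  have hMmax : g m0.1 m0.2 ≤ Vmax := by
    have hsle : ∑ x', Pφ m0.1 m0.2 x' * Vb x' ≤ g m0.1 m0.2 := by
      calc ∑ x', Pφ m0.1 m0.2 x' * Vb x' ≤ ∑ x', Pφ m0.1 m0.2 x' * g m0.1 m0.2 :=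
            Finset.sum_le_sum fun x' _ => mul_le_mul_of_nonneg_left (hVbM x') (hPφ0 _ _ _)
        _ = g m0.1 m0.2 := by rw [← Finset.sum_mul, hPφ1, one_mul]
    have h2 := (hrφ m0.1 m0.2).2
    have h3 := hgVb m0.1 m0.2
    rw [hV, le_div_iff₀ h1γ]
    nlinarith [mul_le_mul_of_nonneg_left hsle hγ0]
  have hVbmax : ∀ x, Vb x ≤ Vmax := fun x => le_trans (hVbM x) hMmax
  obtain ⟨m1, -, hmin⟩ := Finset.exists_min_image (Finset.univ : Finset (Sφ × 𝒜))
    (fun pr => g pr.1 pr.2) Finset.univ_nonempty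
  have hmin' : ∀ x a, g m1.1 m1.2 ≤ g x a := fun x a => hmin (x, a) (Finset.mem_univ _)
  have hm0 : 0 ≤ g m1.1 m1.2 := by
    have hsge : g m1.1 m1.2 ≤ ∑ x', Pφ m1.1 m1.2 x' * Vb x' := by
      calc g m1.1 m1.2 = ∑ x', Pφ m1.1 m1.2 x' * g m1.1 m1.2 := by
            rw [← Finset.sum_mul, hPφ1, one_mul]
        _ ≤ ∑ x', Pφ m1.1 m1.2 x' * Vb x' :=
            Finset.sum_le_sum fun x' _ => mul_le_mul_of_nonneg_left
              (le_trans (hmin' x' m1.2) (hgle x' m1.2)) (hPφ0 _ _ _)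
    have h1 := (hrφ m1.1 m1.2).1
    have h3 := hgVb m1.1 m1.2
    nlinarith [mul_le_mul_of_nonneg_left hsge hγ0]
  have hVb0 : ∀ x, 0 ≤ Vb x := fun x =>
    le_trans hm0 (le_trans (hmin' x m1.2) (hgle x m1.2))
  have hVbmaxabs : ∀ s : ℕ, |Vb (φ s)| ≤ Vmax := fun s => by
    rw [abs_of_nonneg (hVb0 _)]; exact hVbmax _
  have hVeq : ∀ s, Vb (φ s) = g (φ s) (πφ s) :=
    fun s => le_antisymm (hVble _ _ (hgreedy s)) (hgle _ _)
  -- fiber decomposition of pushed-forward transition probabilities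
  have hitesum : ∀ (s : ℕ) (a : 𝒜) (x : Sφ),
      Summable (fun j => if φ j = x then p s a j else 0) := by
    intro s a x
    refine Summable.of_nonneg_of_le (fun j => ?_) (fun j => ?_) (hp1 s a).summable
    · by_cases h : φ j = x <;> simp [h, hp0 s a j]
    · by_cases h : φ j = x <;> simp [h, hp0 s a j]
  have hfiber : ∀ (s : ℕ) (a : 𝒜) (c : Sφ → ℝ),
      (∑ x : Sφ, (∑' j, if φ j = x then p s a j else 0) * c x) = ∑' j, p s a j * c (φ j) := by
    intro s a c
    have h1 : ∀ x, Summable fun j => (if φ j = x then p s a j else 0) * c x :=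
      fun x => (hitesum s a x).mul_right (c x)
    calc (∑ x : Sφ, (∑' j, if φ j = x then p s a j else 0) * c x)
        = ∑ x : Sφ, ∑' j, (if φ j = x then p s a j else 0) * c x :=
          Finset.sum_congr rfl fun x _ => (tsum_mul_right).symm
      _ = ∑' j, ∑ x : Sφ, (if φ j = x then p s a j else 0) * c x :=
          (Summable.tsum_finsetSum fun x _ => h1 x).symm
      _ = ∑' j, p s a j * c (φ j) := by
          refine tsum_congr fun j => ?_
          simp [ite_mul, Finset.sum_ite_eq]
  have hΦ0 : ∀ (s : ℕ) (a : 𝒜) (x : Sφ), 0 ≤ ∑' j, if φ j = x then p s a j else 0 := by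
    intro s a x
    refine tsum_nonneg fun j => ?_
    by_cases h : φ j = x <;> simp [h, hp0 s a j]
  have hΦ1 : ∀ (s : ℕ) (a : 𝒜), (∑ x : Sφ, ∑' j, if φ j = x then p s a j else 0) = 1 := by
    intro s a
    have := hfiber s a (fun _ => 1)
    simpa [(hp1 s a).tsum_eq] using this
  -- abbreviations
  set W : ℕ → 𝒜 → ℝ := fun s a =>
    ∑ x : Sφ, |(∑' j, if φ j = x then p s a j else 0) - Pφ (φ s) a x| with hWdef
  set E : ℕ → 𝒜 → ℝ := fun s a => |r s a - rφ (φ s) a| + γ/2 * Vmax * W s a with hEdef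
  have hW0 : ∀ s a, 0 ≤ W s a := by
    intro s a; simp only [hWdef]
    exact Finset.sum_nonneg fun x _ => abs_nonneg _
  have hW2 : ∀ s a, W s a ≤ 2 := by
    intro s a; simp only [hWdef]
    calc (∑ x : Sφ, |(∑' j, if φ j = x then p s a j else 0) - Pφ (φ s) a x|)
        ≤ ∑ x : Sφ, ((∑' j, if φ j = x then p s a j else 0) + Pφ (φ s) a x) := by
          refine Finset.sum_le_sum fun x _ => ?_
          calc |(∑' j, if φ j = x then p s a j else 0) - Pφ (φ s) a x|
              ≤ |∑' j, if φ j = x then p s a j else 0| + |Pφ (φ s) a x| := abs_sub _ _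
            _ = (∑' j, if φ j = x then p s a j else 0) + Pφ (φ s) a x := by
                rw [abs_of_nonneg (hΦ0 s a x), abs_of_nonneg (hPφ0 _ _ _)]
      _ = 2 := by rw [Finset.sum_add_distrib, hΦ1, hPφ1]; norm_num
  have hrdiff : ∀ s a, |r s a - rφ (φ s) a| ≤ Rmax := by
    intro s a
    have h1 := (hr s a).1; have h2 := (hr s a).2
    have h3 := (hrφ (φ s) a).1; have h4 := (hrφ (φ s) a).2
    rw [abs_le]; constructor <;> linarith
  have hE0 : ∀ s a, 0 ≤ E s a := by
    intro s a; simp only [hEdef]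
    have h2 : 0 ≤ γ/2 * Vmax := mul_nonneg (by linarith) hVmax0
    have h5 := abs_nonneg (r s a - rφ (φ s) a)
    nlinarith [mul_nonneg h2 (hW0 s a)]
  have hE1 : ∀ s a, E s a ≤ Rmax + γ * Vmax := by
    intro s a; simp only [hEdef]
    have h2 : 0 ≤ γ/2 * Vmax := mul_nonneg (by linarith) hVmax0
    have h3 := mul_le_mul_of_nonneg_left (hW2 s a) h2
    have h4 := hrdiff s a
    nlinarith
  -- the mean-value decomposition of the one-step Bellman error
  have hε0 : ∀ (s : ℕ) (a : 𝒜),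
      (∑ x : Sφ, ((∑' j, if φ j = x then p s a j else 0) - Pφ (φ s) a x)) = 0 := by
    intro s a
    rw [Finset.sum_sub_distrib, hΦ1, hPφ1, sub_self]
  have hmid : ∀ (s : ℕ) (a : 𝒜),
      |∑ x : Sφ, ((∑' j, if φ j = x then p s a j else 0) - Pφ (φ s) a x) * Vb x|
        ≤ Vmax/2 * W s a := by
    intro s a
    have hsplit : (∑ x : Sφ, ((∑' j, if φ j = x then p s a j else 0) - Pφ (φ s) a x) * Vb x)
        = ∑ x : Sφ, ((∑' j, if φ j = x then p s a j else 0) - Pφ (φ s) a x)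
            * (Vb x - Vmax/2) := by
      have h1 : (∑ x : Sφ, ((∑' j, if φ j = x then p s a j else 0) - Pφ (φ s) a x)
          * (Vb x - Vmax/2))
          = (∑ x : Sφ, ((∑' j, if φ j = x then p s a j else 0) - Pφ (φ s) a x) * Vb x)
            - (∑ x : Sφ, ((∑' j, if φ j = x then p s a j else 0) - Pφ (φ s) a x)) * (Vmax/2) := by
        rw [Finset.sum_mul, ← Finset.sum_sub_distrib]
        exact Finset.sum_congr rfl fun x _ => by ring
      rw [h1, hε0, zero_mul, sub_zero]
    rw [hsplit]
    calc |∑ x : Sφ, ((∑' j, if φ j = x then p s a j else 0) - Pφ (φ s) a x) * (Vb x - Vmax/2)|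
        ≤ ∑ x : Sφ, |((∑' j, if φ j = x then p s a j else 0) - Pφ (φ s) a x) * (Vb x - Vmax/2)| :=
          Finset.abs_sum_le_sum_abs _ _
      _ ≤ ∑ x : Sφ, |(∑' j, if φ j = x then p s a j else 0) - Pφ (φ s) a x| * (Vmax/2) := by
          refine Finset.sum_le_sum fun x _ => ?_
          rw [abs_mul]
          refine mul_le_mul_of_nonneg_left ?_ (abs_nonneg _)
          rw [abs_le]
          constructor
          · have := hVb0 x; linarith
          · have := hVbmax x; linarith
      _ = Vmax/2 * W s a := by
          simp only [hWdef]
          rw [← Finset.sum_mul, mul_comm]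
  have hdiff : ∀ (s : ℕ) (a : 𝒜),
      r s a + γ * (∑' s', p s a s' * Vb (φ s')) - Vb (φ s)
        = (r s a - rφ (φ s) a)
          + γ * (∑ x : Sφ, ((∑' j, if φ j = x then p s a j else 0) - Pφ (φ s) a x) * Vb x)
          + (g (φ s) a - Vb (φ s)) := by
    intro s a
    have h2 : (∑ x : Sφ, ((∑' j, if φ j = x then p s a j else 0) - Pφ (φ s) a x) * Vb x)
        = (∑ x : Sφ, (∑' j, if φ j = x then p s a j else 0) * Vb x)
          - ∑ x : Sφ, Pφ (φ s) a x * Vb x := by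
      rw [← Finset.sum_sub_distrib]
      exact Finset.sum_congr rfl fun x _ => by ring
    rw [← hfiber s a Vb, h2, hgVb (φ s) a]
    ring
  have claimA : ∀ (s : ℕ) (a : 𝒜),
      r s a + γ * (∑' s', p s a s' * Vb (φ s')) - Vb (φ s) ≤ E s a := by
    intro s a
    have h1 := hdiff s a
    have h2 : γ * (∑ x : Sφ, ((∑' j, if φ j = x then p s a j else 0) - Pφ (φ s) a x) * Vb x)
        ≤ γ * (Vmax/2 * W s a) :=
      mul_le_mul_of_nonneg_left (le_trans (le_abs_self _) (hmid s a)) hγ0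
    have h3 := le_abs_self (r s a - rφ (φ s) a)
    have h4 := hgle (φ s) a
    simp only [hEdef]
    linarith
  have claimB : ∀ s : ℕ,
      -(E s (πφ s)) ≤ r s (πφ s) + γ * (∑' s', p s (πφ s) s' * Vb (φ s')) - Vb (φ s) := by
    intro s
    have h1 := hdiff s (πφ s)
    have h2 : γ * (-(Vmax/2 * W s (πφ s)))
        ≤ γ * (∑ x : Sφ, ((∑' j, if φ j = x then p s (πφ s) j else 0) - Pφ (φ s) (πφ s) x) * Vb x) :=
      mul_le_mul_of_nonneg_left (neg_le_of_abs_le (hmid s (πφ s))) hγ0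
    have h3 := neg_abs_le (r s (πφ s) - rφ (φ s) (πφ s))
    have h4 := hVeq s
    simp only [hEdef]
    linarith
  -- summability of p * V
  have hpV : ∀ (s : ℕ) (a : 𝒜), Summable fun s' => p s a s' * Vb (φ s') := by
    intro s a
    refine Summable.of_nonneg_of_le (fun s' => mul_nonneg (hp0 _ _ _) (hVb0 _)) (fun s' => ?_)
      ((hp1 s a).summable.mul_right Vmax)
    exact mul_le_mul_of_nonneg_left (hVbmax _) (hp0 s a s')
  -- instantiate the policy lemma for π
  have hqπ0 : ∀ s s', 0 ≤ ∑ a, π s a * p s a s' :=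
    fun s s' => Finset.sum_nonneg fun a _ => mul_nonneg (hπ0 s a) (hp0 s a s')
  have hqπ1 : ∀ s, HasSum (fun s' => ∑ a, π s a * p s a s') 1 := by
    intro s
    have h1 : HasSum (fun s' => ∑ a, π s a * p s a s') (∑ a, π s a * 1) :=
      hasSum_sum fun a _ => (hp1 s a).mul_left (π s a)
    simpa [hπ1 s] using h1
  have hRπ0 : ∀ s, 0 ≤ ∑ a, π s a * r s a :=
    fun s => Finset.sum_nonneg fun a _ => mul_nonneg (hπ0 s a) ((hr s a).1)
  have hRπ1 : ∀ s, (∑ a, π s a * r s a) ≤ Rmax := by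
    intro s
    calc (∑ a, π s a * r s a) ≤ ∑ a, π s a * Rmax :=
          Finset.sum_le_sum fun a _ => mul_le_mul_of_nonneg_left ((hr s a).2) (hπ0 s a)
      _ = Rmax := by rw [← Finset.sum_mul, hπ1, one_mul]
  obtain ⟨hdπnn, hdπhs, hIπ⟩ := policy_bound hγ0 hγ1 hqπ0 hqπ1 hRπ0 hRπ1
    (fun s => hVb0 (φ s)) (fun s => hVbmax (φ s)) hd₀0 hd₀1 hdπ0 hdπrec
  -- instantiate the policy lemma for πφ
  have hqφ0 : ∀ s s', 0 ≤ p s (πφ s) s' := fun s s' => hp0 s (πφ s) s'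
  have hqφ1 : ∀ s, HasSum (fun s' => p s (πφ s) s') 1 := fun s => hp1 s (πφ s)
  have hRφ0 : ∀ s, 0 ≤ r s (πφ s) := fun s => (hr s (πφ s)).1
  have hRφ1 : ∀ s, r s (πφ s) ≤ Rmax := fun s => (hr s (πφ s)).2
  obtain ⟨hdφnn, hdφhs, hIφ⟩ := policy_bound hγ0 hγ1 hqφ0 hqφ1 hRφ0 hRφ1
    (fun s => hVb0 (φ s)) (fun s => hVbmax (φ s)) hd₀0 hd₀1 hdφ0 hdφrec
  -- pointwise comparison for π
  have hqsplit : ∀ s, (∑' s', (∑ a, π s a * p s a s') * Vb (φ s'))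
      = ∑ a, π s a * ∑' s', p s a s' * Vb (φ s') := by
    intro s
    calc (∑' s', (∑ a, π s a * p s a s') * Vb (φ s'))
        = ∑' s', ∑ a, π s a * (p s a s' * Vb (φ s')) := by
          refine tsum_congr fun s' => ?_
          rw [Finset.sum_mul]
          exact Finset.sum_congr rfl fun a _ => mul_assoc _ _ _
      _ = ∑ a, ∑' s', π s a * (p s a s' * Vb (φ s')) :=
          Summable.tsum_finsetSum fun a _ => (hpV s a).mul_left (π s a)
      _ = ∑ a, π s a * ∑' s', p s a s' * Vb (φ s') :=
          Finset.sum_congr rfl fun a _ => tsum_mul_left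
  have hfπ : ∀ s, (∑ a, π s a * r s a) + γ * (∑' s', (∑ a, π s a * p s a s') * Vb (φ s'))
      - Vb (φ s) = ∑ a, π s a * (r s a + γ * (∑' s', p s a s' * Vb (φ s')) - Vb (φ s)) := by
    intro s
    have h1 : (∑ a, π s a * (r s a + γ * (∑' s', p s a s' * Vb (φ s')) - Vb (φ s)))
        = (∑ a, π s a * r s a) + γ * (∑ a, π s a * ∑' s', p s a s' * Vb (φ s'))
          - (∑ a, π s a) * Vb (φ s) := by
      rw [Finset.mul_sum, Finset.sum_mul, ← Finset.sum_add_distrib, ← Finset.sum_sub_distrib]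
      exact Finset.sum_congr rfl fun a _ => by ring
    rw [h1, hqsplit s, hπ1, one_mul]
  have hcmpπ : ∀ s, (∑ a, π s a * r s a) + γ * (∑' s', (∑ a, π s a * p s a s') * Vb (φ s'))
      - Vb (φ s) ≤ ∑ a, π s a * E s a := by
    intro s
    rw [hfπ s]
    exact Finset.sum_le_sum fun a _ => mul_le_mul_of_nonneg_left (claimA s a) (hπ0 s a)
  -- pointwise comparison for πφ
  have hcmpφ : ∀ s, -(E s (πφ s)) ≤ r s (πφ s) + γ * (∑' s', p s (πφ s) s' * Vb (φ s'))
      - Vb (φ s) := claimB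
  -- bounds needed for the comparison lemma
  have hCb : ∀ s, |(∑ a, π s a * r s a) + γ * (∑' s', (∑ a, π s a * p s a s') * Vb (φ s'))
      - Vb (φ s)| ≤ Rmax + γ * Vmax + Vmax := by
    intro s
    obtain ⟨hk0, hk1⟩ := kernel_val_bounds (hqπ0 s) (hqπ1 s)
      (fun s' => hVb0 (φ s')) (fun s' => hVbmax (φ s'))
    have h1 := hRπ0 s; have h2 := hRπ1 s
    have h3 := hVb0 (φ s); have h4 := hVbmax (φ s)
    rw [abs_le]; constructor <;> nlinarith
  have hCbφ : ∀ s, |r s (πφ s) + γ * (∑' s', p s (πφ s) s' * Vb (φ s')) - Vb (φ s)|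
      ≤ Rmax + γ * Vmax + Vmax := by
    intro s
    obtain ⟨hk0, hk1⟩ := kernel_val_bounds (hqφ0 s) (hqφ1 s)
      (fun s' => hVb0 (φ s')) (fun s' => hVbmax (φ s'))
    have h1 := hRφ0 s; have h2 := hRφ1 s
    have h3 := hVb0 (φ s); have h4 := hVbmax (φ s)
    rw [abs_le]; constructor <;> nlinarith
  have heπ0 : ∀ s, 0 ≤ ∑ a, π s a * E s a :=
    fun s => Finset.sum_nonneg fun a _ => mul_nonneg (hπ0 s a) (hE0 s a)
  have heπ1 : ∀ s, (∑ a, π s a * E s a) ≤ Rmax + γ * Vmax := by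
    intro s
    calc (∑ a, π s a * E s a) ≤ ∑ a, π s a * (Rmax + γ * Vmax) :=
          Finset.sum_le_sum fun a _ => mul_le_mul_of_nonneg_left (hE1 s a) (hπ0 s a)
      _ = Rmax + γ * Vmax := by rw [← Finset.sum_mul, hπ1, one_mul]
  have heπabs : ∀ s, |∑ a, π s a * E s a| ≤ Rmax + γ * Vmax + Vmax := by
    intro s
    rw [abs_of_nonneg (heπ0 s)]
    have := heπ1 s; have := hVmax0; linarith
  have heφabs : ∀ s, |E s (πφ s)| ≤ Rmax + γ * Vmax + Vmax := by
    intro s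
    rw [abs_of_nonneg (hE0 s (πφ s))]
    have := hE1 s (πφ s); have := hVmax0; linarith
  have heφabsneg : ∀ s, |-(E s (πφ s))| ≤ Rmax + γ * Vmax + Vmax := by
    intro s; rw [abs_neg]; exact heφabs s
  -- monotone comparison under the discounted occupation sums
  have hTπ : (∑' t, γ^t * ∑' s, dπ t s * ((∑ a, π s a * r s a)
        + γ * (∑' s', (∑ a, π s a * p s a s') * Vb (φ s')) - Vb (φ s)))
      ≤ ∑' t, γ^t * ∑' s, dπ t s * ∑ a, π s a * E s a :=
    mono_ts hγ0 hγ1 hdπnn hdπhs hcmpπ hCb heπabs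
  have hTφpre : (∑' t, γ^t * ∑' s, dφ t s * (-(E s (πφ s))))
      ≤ ∑' t, γ^t * ∑' s, dφ t s * (r s (πφ s)
        + γ * (∑' s', p s (πφ s) s' * Vb (φ s')) - Vb (φ s)) :=
    mono_ts hγ0 hγ1 hdφnn hdφhs hcmpφ heφabsneg hCbφ
  have hTφ : -(∑' t, γ^t * ∑' s, dφ t s * E s (πφ s))
      ≤ ∑' t, γ^t * ∑' s, dφ t s * (r s (πφ s)
        + γ * (∑' s', p s (πφ s) s' * Vb (φ s')) - Vb (φ s)) := by
    refine le_trans (le_of_eq ?_) hTφpre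
    rw [← tsum_neg]
    refine tsum_congr fun t => ?_
    have h1 : (∑' s, dφ t s * -(E s (πφ s))) = -(∑' s, dφ t s * E s (πφ s)) := by
      rw [← tsum_neg]
      exact tsum_congr fun s => mul_neg _ _
    rw [h1, mul_neg]
  -- swap sums
  obtain ⟨hswπ, hcπsum⟩ := swap_ts hγ0 hγ1 hdπnn hdπhs heπ0 heπ1
  obtain ⟨hswφ, hcφsum⟩ := swap_ts hγ0 hγ1 hdφnn hdφhs
    (fun s => hE0 s (πφ s)) (fun s => hE1 s (πφ s))
  -- coefficient rewriting
  have hcoefπ : ∀ (s : ℕ) (a : 𝒜), (∑' t : ℕ, γ^t * (dπ t s * π s a)) = (∑' t : ℕ, γ^t * dπ t s) * π s a := by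
    intro s a
    rw [← tsum_mul_right]
    exact tsum_congr fun t => (mul_assoc _ _ _).symm
  have hcoefφ : ∀ (s : ℕ) (a : 𝒜),
      (∑' t : ℕ, γ^t * (dφ t s * (if a = πφ s then (1:ℝ) else 0))) = (∑' t : ℕ, γ^t * dφ t s) * (if a = πφ s then (1:ℝ) else 0) := by
    intro s a
    rw [← tsum_mul_right]
    exact tsum_congr fun t => (mul_assoc _ _ _).symm
  have hcπ0 : ∀ s, 0 ≤ (∑' t : ℕ, γ^t * dπ t s) :=
    fun s => tsum_nonneg fun t => mul_nonneg (pow_nonneg hγ0 t) (hdπnn t s)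
  have hcφ0 : ∀ s, 0 ≤ (∑' t : ℕ, γ^t * dφ t s) :=
    fun s => tsum_nonneg fun t => mul_nonneg (pow_nonneg hγ0 t) (hdφnn t s)
  -- splitting the weighted error for π
  have hsplitπ : ∀ s : ℕ, (∑' t : ℕ, γ^t * dπ t s) * (∑ a, π s a * E s a)
      = (∑ a, (∑' t : ℕ, γ^t * dπ t s) * π s a * |r s a - rφ (φ s) a|)
        + γ/2 * Vmax * ∑ a, (∑' t : ℕ, γ^t * dπ t s) * π s a * (∑ x : Sφ, |(∑' j, if φ j = x then p s a j else 0) - Pφ (φ s) a x|) := by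
    intro s
    simp only [hEdef, hWdef]
    rw [Finset.mul_sum]
    rw [show (∑ a, (∑' t : ℕ, γ^t * dπ t s) * (π s a * (|r s a - rφ (φ s) a| + γ/2 * Vmax * (∑ x : Sφ, |(∑' j, if φ j = x then p s a j else 0) - Pφ (φ s) a x|))))
        = ∑ a, ((∑' t : ℕ, γ^t * dπ t s) * π s a * |r s a - rφ (φ s) a|
          + γ/2 * Vmax * ((∑' t : ℕ, γ^t * dπ t s) * π s a * (∑ x : Sφ, |(∑' j, if φ j = x then p s a j else 0) - Pφ (φ s) a x|))) from
      Finset.sum_congr rfl fun a _ => by ring]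
    rw [Finset.sum_add_distrib, ← Finset.mul_sum]
  have hsplitφ : ∀ s : ℕ, (∑' t : ℕ, γ^t * dφ t s) * E s (πφ s)
      = (∑ a, (∑' t : ℕ, γ^t * dφ t s) * (if a = πφ s then (1:ℝ) else 0) * |r s a - rφ (φ s) a|)
        + γ/2 * Vmax * ∑ a, (∑' t : ℕ, γ^t * dφ t s) * (if a = πφ s then (1:ℝ) else 0) * (∑ x : Sφ, |(∑' j, if φ j = x then p s a j else 0) - Pφ (φ s) a x|) := by
    intro s
    have h1 : (∑ a, (∑' t : ℕ, γ^t * dφ t s) * (if a = πφ s then (1:ℝ) else 0) * |r s a - rφ (φ s) a|)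
        = (∑' t : ℕ, γ^t * dφ t s) * |r s (πφ s) - rφ (φ s) (πφ s)| := by
      rw [show (∑ a, (∑' t : ℕ, γ^t * dφ t s) * (if a = πφ s then (1:ℝ) else 0) * |r s a - rφ (φ s) a|)
          = ∑ a, if a = πφ s then (∑' t : ℕ, γ^t * dφ t s) * |r s a - rφ (φ s) a| else 0 from
        Finset.sum_congr rfl fun a _ => by by_cases h : a = πφ s <;> simp [h]]
      simp [Finset.sum_ite_eq']
    have h2 : (∑ a, (∑' t : ℕ, γ^t * dφ t s) * (if a = πφ s then (1:ℝ) else 0) * (∑ x : Sφ, |(∑' j, if φ j = x then p s a j else 0) - Pφ (φ s) a x|)) = (∑' t : ℕ, γ^t * dφ t s) * W s (πφ s) := by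
      rw [show (∑ a, (∑' t : ℕ, γ^t * dφ t s) * (if a = πφ s then (1:ℝ) else 0) * (∑ x : Sφ, |(∑' j, if φ j = x then p s a j else 0) - Pφ (φ s) a x|))
          = ∑ a, if a = πφ s then (∑' t : ℕ, γ^t * dφ t s) * W s a else 0 from
        Finset.sum_congr rfl fun a _ => by by_cases h : a = πφ s <;> simp [h, hWdef]]
      simp [Finset.sum_ite_eq']
    rw [h1, h2]
    simp only [hEdef]
    ring
  -- summabilities of the per-state error aggregates
  have hαπ : Summable fun s => ∑ a, (∑' t : ℕ, γ^t * dπ t s) * π s a * |r s a - rφ (φ s) a| := by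
    refine Summable.of_nonneg_of_le (fun s => Finset.sum_nonneg fun a _ =>
      mul_nonneg (mul_nonneg (hcπ0 s) (hπ0 s a)) (abs_nonneg _)) (fun s => ?_)
      (hcπsum.mul_left Rmax)
    calc (∑ a, (∑' t : ℕ, γ^t * dπ t s) * π s a * |r s a - rφ (φ s) a|)
        ≤ ∑ a, (∑' t : ℕ, γ^t * dπ t s) * π s a * Rmax := by
          refine Finset.sum_le_sum fun a _ => ?_
          exact mul_le_mul_of_nonneg_left (hrdiff s a) (mul_nonneg (hcπ0 s) (hπ0 s a))
      _ = Rmax * (∑' t : ℕ, γ^t * dπ t s) := by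
          rw [show (∑ a, (∑' t : ℕ, γ^t * dπ t s) * π s a * Rmax) = ∑ a, Rmax * (∑' t : ℕ, γ^t * dπ t s) * π s a from
            Finset.sum_congr rfl fun a _ => by ring, ← Finset.mul_sum, hπ1, mul_one]
  have hβπ : Summable fun s => ∑ a, (∑' t : ℕ, γ^t * dπ t s) * π s a * (∑ x : Sφ, |(∑' j, if φ j = x then p s a j else 0) - Pφ (φ s) a x|) := by
    refine Summable.of_nonneg_of_le (fun s => Finset.sum_nonneg fun a _ =>
      mul_nonneg (mul_nonneg (hcπ0 s) (hπ0 s a)) (by simpa only [hWdef] using hW0 s a)) (fun s => ?_)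
      (hcπsum.mul_left 2)
    calc (∑ a, (∑' t : ℕ, γ^t * dπ t s) * π s a * (∑ x : Sφ, |(∑' j, if φ j = x then p s a j else 0) - Pφ (φ s) a x|))
        ≤ ∑ a, (∑' t : ℕ, γ^t * dπ t s) * π s a * 2 := by
          refine Finset.sum_le_sum fun a _ => ?_
          exact mul_le_mul_of_nonneg_left (by simpa only [hWdef] using hW2 s a) (mul_nonneg (hcπ0 s) (hπ0 s a))
      _ = 2 * (∑' t : ℕ, γ^t * dπ t s) := by
          rw [show (∑ a, (∑' t : ℕ, γ^t * dπ t s) * π s a * 2) = ∑ a, 2 * (∑' t : ℕ, γ^t * dπ t s) * π s a from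
            Finset.sum_congr rfl fun a _ => by ring, ← Finset.mul_sum, hπ1, mul_one]
  have hαφ : Summable fun s => ∑ a, (∑' t : ℕ, γ^t * dφ t s) * (if a = πφ s then (1:ℝ) else 0) * |r s a - rφ (φ s) a| := by
    refine Summable.of_nonneg_of_le (fun s => Finset.sum_nonneg fun a _ =>
      mul_nonneg (mul_nonneg (hcφ0 s) (by positivity)) (abs_nonneg _)) (fun s => ?_)
      (hcφsum.mul_left Rmax)
    calc (∑ a, (∑' t : ℕ, γ^t * dφ t s) * (if a = πφ s then (1:ℝ) else 0) * |r s a - rφ (φ s) a|)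
        ≤ ∑ a, (∑' t : ℕ, γ^t * dφ t s) * (if a = πφ s then (1:ℝ) else 0) * Rmax := by
          refine Finset.sum_le_sum fun a _ => ?_
          exact mul_le_mul_of_nonneg_left (hrdiff s a)
            (mul_nonneg (hcφ0 s) (by positivity))
      _ = Rmax * (∑' t : ℕ, γ^t * dφ t s) := by
          rw [show (∑ a, (∑' t : ℕ, γ^t * dφ t s) * (if a = πφ s then (1:ℝ) else 0) * Rmax) = ∑ a, Rmax * (∑' t : ℕ, γ^t * dφ t s) * (if a = πφ s then (1:ℝ) else 0) from
            Finset.sum_congr rfl fun a _ => by ring, ← Finset.mul_sum]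
          simp [Finset.sum_ite_eq']
  have hβφ : Summable fun s => ∑ a, (∑' t : ℕ, γ^t * dφ t s) * (if a = πφ s then (1:ℝ) else 0) * (∑ x : Sφ, |(∑' j, if φ j = x then p s a j else 0) - Pφ (φ s) a x|) := by
    refine Summable.of_nonneg_of_le (fun s => Finset.sum_nonneg fun a _ =>
      mul_nonneg (mul_nonneg (hcφ0 s) (by positivity)) (by simpa only [hWdef] using hW0 s a)) (fun s => ?_)
      (hcφsum.mul_left 2)
    calc (∑ a, (∑' t : ℕ, γ^t * dφ t s) * (if a = πφ s then (1:ℝ) else 0) * (∑ x : Sφ, |(∑' j, if φ j = x then p s a j else 0) - Pφ (φ s) a x|))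
        ≤ ∑ a, (∑' t : ℕ, γ^t * dφ t s) * (if a = πφ s then (1:ℝ) else 0) * 2 := by
          refine Finset.sum_le_sum fun a _ => ?_
          exact mul_le_mul_of_nonneg_left (by simpa only [hWdef] using hW2 s a)
            (mul_nonneg (hcφ0 s) (by positivity))
      _ = 2 * (∑' t : ℕ, γ^t * dφ t s) := by
          rw [show (∑ a, (∑' t : ℕ, γ^t * dφ t s) * (if a = πφ s then (1:ℝ) else 0) * 2) = ∑ a, 2 * (∑' t : ℕ, γ^t * dφ t s) * (if a = πφ s then (1:ℝ) else 0) from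
            Finset.sum_congr rfl fun a _ => by ring, ← Finset.mul_sum]
          simp [Finset.sum_ite_eq']
  -- the weighted sums split
  have hXπ : (∑' s, (∑' t : ℕ, γ^t * dπ t s) * (∑ a, π s a * E s a))
      = (∑' s, ∑ a, (∑' t : ℕ, γ^t * dπ t s) * π s a * |r s a - rφ (φ s) a|)
        + γ/2 * Vmax * ∑' s, ∑ a, (∑' t : ℕ, γ^t * dπ t s) * π s a * (∑ x : Sφ, |(∑' j, if φ j = x then p s a j else 0) - Pφ (φ s) a x|) := by
    rw [tsum_congr hsplitπ, Summable.tsum_add hαπ (hβπ.mul_left _), tsum_mul_left]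
  have hXφ : (∑' s, (∑' t : ℕ, γ^t * dφ t s) * E s (πφ s))
      = (∑' s, ∑ a, (∑' t : ℕ, γ^t * dφ t s) * (if a = πφ s then (1:ℝ) else 0) * |r s a - rφ (φ s) a|)
        + γ/2 * Vmax * ∑' s, ∑ a, (∑' t : ℕ, γ^t * dφ t s) * (if a = πφ s then (1:ℝ) else 0) * (∑ x : Sφ, |(∑' j, if φ j = x then p s a j else 0) - Pφ (φ s) a x|) := by
    rw [tsum_congr hsplitφ, Summable.tsum_add hαφ (hβφ.mul_left _), tsum_mul_left]
  -- rewrite the goal coefficients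
  have hAπ : (∑' s, ∑ a, ((1 - γ) * ∑' t, γ^t * (dπ t s * π s a)) * |r s a - rφ (φ s) a|)
      = (1 - γ) * ∑' s, ∑ a, (∑' t : ℕ, γ^t * dπ t s) * π s a * |r s a - rφ (φ s) a| := by
    rw [← tsum_mul_left]
    refine tsum_congr fun s => ?_
    rw [Finset.mul_sum]
    refine Finset.sum_congr rfl fun a _ => ?_
    rw [hcoefπ s a]; ring
  have hBπ : (∑' s, ∑ a, ((1 - γ) * ∑' t, γ^t * (dπ t s * π s a)) * (∑ x : Sφ, |(∑' j, if φ j = x then p s a j else 0) - Pφ (φ s) a x|))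
      = (1 - γ) * ∑' s, ∑ a, (∑' t : ℕ, γ^t * dπ t s) * π s a * (∑ x : Sφ, |(∑' j, if φ j = x then p s a j else 0) - Pφ (φ s) a x|) := by
    rw [← tsum_mul_left]
    refine tsum_congr fun s => ?_
    rw [Finset.mul_sum]
    refine Finset.sum_congr rfl fun a _ => ?_
    rw [hcoefπ s a]; ring
  have hAφ : (∑' s, ∑ a, ((1 - γ) * ∑' t, γ^t * (dφ t s * (if a = πφ s then (1:ℝ) else 0))) * |r s a - rφ (φ s) a|)
      = (1 - γ) * ∑' s, ∑ a, (∑' t : ℕ, γ^t * dφ t s) * (if a = πφ s then (1:ℝ) else 0) * |r s a - rφ (φ s) a| := by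
    rw [← tsum_mul_left]
    refine tsum_congr fun s => ?_
    rw [Finset.mul_sum]
    refine Finset.sum_congr rfl fun a _ => ?_
    rw [hcoefφ s a]; ring
  have hBφ : (∑' s, ∑ a, ((1 - γ) * ∑' t, γ^t * (dφ t s * (if a = πφ s then (1:ℝ) else 0))) * (∑ x : Sφ, |(∑' j, if φ j = x then p s a j else 0) - Pφ (φ s) a x|))
      = (1 - γ) * ∑' s, ∑ a, (∑' t : ℕ, γ^t * dφ t s) * (if a = πφ s then (1:ℝ) else 0) * (∑ x : Sφ, |(∑' j, if φ j = x then p s a j else 0) - Pφ (φ s) a x|) := by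
    rw [← tsum_mul_left]
    refine tsum_congr fun s => ?_
    rw [Finset.mul_sum]
    refine Finset.sum_congr rfl fun a _ => ?_
    rw [hcoefφ s a]; ring
  -- explicit forms of the two value identities
  have hIπ' : (∑' t, γ^t * ∑' s, dπ t s * ∑ a, π s a * r s a)
      = (∑' s, d₀ s * Vb (φ s))
        + ∑' t, γ^t * ∑' s, dπ t s * ((∑ a, π s a * r s a)
          + γ * (∑' s', (∑ a, π s a * p s a s') * Vb (φ s')) - Vb (φ s)) := hIπ
  have hIφ' : (∑' t, γ^t * ∑' s, dφ t s * r s (πφ s))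
      = (∑' s, d₀ s * Vb (φ s))
        + ∑' t, γ^t * ∑' s, dφ t s * (r s (πφ s)
          + γ * (∑' s', p s (πφ s) s' * Vb (φ s')) - Vb (φ s)) := hIφ
  -- put everything together
  rw [hIπ', hIφ']
  have hfin : ((∑' s, d₀ s * Vb (φ s))
        + ∑' t, γ^t * ∑' s, dπ t s * ((∑ a, π s a * r s a)
          + γ * (∑' s', (∑ a, π s a * p s a s') * Vb (φ s')) - Vb (φ s)))
      - ((∑' s, d₀ s * Vb (φ s))
        + ∑' t, γ^t * ∑' s, dφ t s * (r s (πφ s)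
          + γ * (∑' s', p s (πφ s) s' * Vb (φ s')) - Vb (φ s)))
      ≤ (∑' s, (∑' t : ℕ, γ^t * dπ t s) * (∑ a, π s a * E s a)) + (∑' s, (∑' t : ℕ, γ^t * dφ t s) * E s (πφ s)) := by
    linarith [hTπ, hTφ, hswπ, hswφ]
  refine le_trans hfin (le_of_eq ?_)
  rw [hAπ, hBπ, hAφ, hBφ, hXπ, hXφ]
  have hne : (1 - γ) ≠ 0 := ne_of_gt h1γ
  field_simp
end

section
/- Out-of-distribution generalization bound: let M be an MDP on ℕ (the test task) with finite action set 𝒜, discount γ ∈ [0,1), rewards r(s,a) ∈ [0, Rmax], Vmax = Rmax/(1−γ). Let φ : ℕ → S_φ be a state abstraction with S_φ finite, let (r_φ^{tr}, P_φ^{tr}) and (r_φ^{te}, P_φ^{te}) be two abstract MDPs on S_φ with rewards in [0, Rmax] (the abstract training and test MDPs), let g be the fixed point g(x,a) = r_φ^{tr}(x,a) + γ ∑_{x'} P_φ^{tr}((x,a),x') max_{a'} g(x',a'), and let π^φ be deterministic greedy with π^φ(s) ∈ argmax_a g(φ(s),a). Then for any policy π and any test start probability vector d₀: J(π, d₀)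 − J(π^φ, d₀) ≤ (1/(1−γ)) ∑_{d ∈ {d^π, d^{π^φ}}} [ ‖ε_r^φ‖_d + (γ/2) Vmax ‖ε_p^φ‖_d + ‖ε_r^{OOD}‖_{Φ↑d} + (γ/2) Vmax ‖ε_p^{OOD}‖_{Φ↑d} ], where ε_r^φ := r − Φ↓r_φ^{te}, ε_p^φ := Φ↑p − Φ↓P_φ^{te}, ε_r^{OOD} := r_φ^{tr} − r_φ^{te}, ε_p^{OOD} := P_φ^{tr} − P_φ^{te}, d^π and d^{π^φ} are the normalized state-action successor representations started from d₀, (Φ↑d)(x,a) := ∑_{s : φ(s)=x} d(s,a), and the weighted norms are ‖f‖_d := ∑ d·|f| entrywise, with transition-matrix differences measured by the weighted sum of L1 row differences. -/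
open Finset

namespace S15

/-- Nonneg Fubini package for `ℕ × ℕ` real families. -/
lemma fubini {f : ℕ → ℕ → ℝ} (h0 : ∀ i j, 0 ≤ f i j)
    (hrow : ∀ i, Summable (f i)) (hcol : Summable fun i => ∑' j, f i j) :
    (∀ j, Summable fun i => f i j) ∧ Summable (fun j => ∑' i, f i j) ∧
      (∑' i, ∑' j, f i j) = ∑' j, ∑' i, f i j := by
  have hF : Summable (Function.uncurry f) :=
    (summable_prod_of_nonneg (fun p => h0 p.1 p.2)).mpr ⟨hrow, hcol⟩
  have hFs : Summable (fun q : ℕ × ℕ => f q.2 q.1) := hF.prod_symm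
  have h1 : ∀ j, Summable fun i => f i j := fun j => hFs.prod_factor j
  have h2 : Summable fun j => ∑' i, f i j := hFs.prod
  exact ⟨h1, h2, (Summable.tsum_comm' hF hrow h1).symm⟩

/-- Markov chain nonnegativity / total mass 1. -/
lemma chain (K : ℕ → ℕ → ℝ) (hK0 : ∀ s s', 0 ≤ K s s') (hK1 : ∀ s, HasSum (K s) 1)
    (d : ℕ → ℕ → ℝ) (hd00 : ∀ s, 0 ≤ d 0 s) (hd01 : HasSum (d 0) 1)
    (hrec : ∀ t s', d (t+1) s' = ∑' s, d t s * K s s') :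
    ∀ t, (∀ s, 0 ≤ d t s) ∧ HasSum (d t) 1 := by
  intro t
  induction t with
  | zero => exact ⟨hd00, hd01⟩
  | succ t ih =>
    obtain ⟨h0, h1⟩ := ih
    have hrowS : ∀ i, Summable fun j => d t i * K i j :=
      fun i => (hK1 i).summable.mul_left _
    have hcoleq : (fun i => ∑' j, d t i * K i j) = d t := by
      funext i
      rw [tsum_mul_left, (hK1 i).tsum_eq, mul_one]
    have hcol : Summable fun i => ∑' j, d t i * K i j := by
      rw [hcoleq]; exact h1.summable
    obtain ⟨hc1, hc2, hc3⟩ := fubini (fun i j => mul_nonneg (h0 i) (hK0 i j)) hrowS hcol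
    have hdt1 : d (t+1) = fun j => ∑' i, d t i * K i j := by
      funext j; exact hrec t j
    constructor
    · intro s; rw [hrec t s]
      exact tsum_nonneg fun i => mul_nonneg (h0 i) (hK0 i s)
    · rw [hdt1]
      have : ∑' j, ∑' i, d t i * K i j = 1 := by
        rw [← hc3, hcoleq, h1.tsum_eq]
      exact this ▸ hc2.hasSum
/-- expectation step: `⟨d_{t+1}, f⟩ = ⟨d_t, K f⟩` for nonneg bounded `f`. -/
lemma step (K : ℕ → ℕ → ℝ) (hK0 : ∀ s s', 0 ≤ K s s') (hK1 : ∀ s, HasSum (K s) 1)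
    (dt : ℕ → ℝ) (hdt0 : ∀ s, 0 ≤ dt s) (hdt : Summable dt)
    (f : ℕ → ℝ) (C : ℝ) (hf0 : ∀ s, 0 ≤ f s) (hfC : ∀ s, f s ≤ C) :
    ∑' s', (∑' s, dt s * K s s') * f s' = ∑' s, dt s * ∑' s', K s s' * f s' := by
  have hC : 0 ≤ C := le_trans (hf0 0) (hfC 0)
  set F : ℕ → ℕ → ℝ := fun s s' => dt s * (K s s' * f s') with hF
  have hF0 : ∀ s s', 0 ≤ F s s' :=
    fun s s' => mul_nonneg (hdt0 s) (mul_nonneg (hK0 s s') (hf0 s'))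
  have hKf : ∀ s, Summable fun s' => K s s' * f s' := fun s =>
    Summable.of_nonneg_of_le (fun s' => mul_nonneg (hK0 s s') (hf0 s'))
      (fun s' => mul_le_mul_of_nonneg_left (hfC s') (hK0 s s'))
      ((hK1 s).summable.mul_right C)
  have hrow : ∀ s, Summable (F s) := fun s => (hKf s).mul_left _
  have hKfC : ∀ s, ∑' s', K s s' * f s' ≤ C := by
    intro s
    calc ∑' s', K s s' * f s' ≤ ∑' s', K s s' * C :=
          Summable.tsum_le_tsum (fun s' => mul_le_mul_of_nonneg_left (hfC s') (hK0 s s'))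
            (hKf s) ((hK1 s).summable.mul_right C)
      _ = C := by rw [tsum_mul_right, (hK1 s).tsum_eq, one_mul]
  have hcol : Summable fun s => ∑' s', F s s' := by
    apply Summable.of_nonneg_of_le
      (fun s => tsum_nonneg fun s' => hF0 s s')
      (fun s => ?_) (hdt.mul_right C)
    rw [hF, tsum_mul_left]
    exact mul_le_mul_of_nonneg_left (hKfC s) (hdt0 s)
  obtain ⟨hc1, hc2, hc3⟩ := fubini hF0 hrow hcol
  calc ∑' s', (∑' s, dt s * K s s') * f s'
      = ∑' s', ∑' s, F s s' := by
        congr 1; funext s'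
        rw [← tsum_mul_right]
        congr 1; funext s; rw [hF]; ring
    _ = ∑' s, ∑' s', F s s' := hc3.symm
    _ = ∑' s, dt s * ∑' s', K s s' * f s' := by
        congr 1; funext s; rw [hF, tsum_mul_left]

section DPart
variable {𝒜 : Type*} [Fintype 𝒜] [Nonempty 𝒜]

lemma dle1 {d : ℕ → ℝ} (h0 : ∀ s, 0 ≤ d s) (h1 : HasSum d 1) : ∀ s, d s ≤ 1 := by
  intro s
  have := Summable.le_tsum h1.summable s (fun j _ => h0 j)
  rwa [h1.tsum_eq] at this

lemma rho_le_one {ρ : ℕ → 𝒜 → ℝ} (hρ0 : ∀ s a, 0 ≤ ρ s a) (hρ1 : ∀ s, ∑ a, ρ s a = 1) :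
    ∀ s a, ρ s a ≤ 1 := fun s a => by
  have := Finset.single_le_sum (f := ρ s) (fun a _ => hρ0 s a) (mem_univ a)
  rwa [hρ1 s] at this

lemma D_props (γ : ℝ) (hγ0 : 0 ≤ γ) (hγ1 : γ < 1)
    (ρ : ℕ → 𝒜 → ℝ) (hρ0 : ∀ s a, 0 ≤ ρ s a) (hρ1 : ∀ s, ∑ a, ρ s a = 1)
    (d : ℕ → ℕ → ℝ) (hd0 : ∀ t s, 0 ≤ d t s) (hd1 : ∀ t, HasSum (d t) 1)
    (D : ℕ → 𝒜 → ℝ) (hD : ∀ s a, D s a = (1-γ) * ∑' t, γ^t * (d t s * ρ s a)) :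
    (∀ s a, 0 ≤ D s a) ∧ ∀ a, Summable (fun s => D s a) := by
  have hγ' : (0:ℝ) ≤ 1 - γ := by linarith
  have hv0 : ∀ (a : 𝒜) t s, 0 ≤ γ^t * (d t s * ρ s a) :=
    fun a t s => mul_nonneg (pow_nonneg hγ0 t) (mul_nonneg (hd0 t s) (hρ0 s a))
  constructor
  · intro s a; rw [hD]
    exact mul_nonneg hγ' (tsum_nonneg fun t => hv0 a t s)
  · intro a
    have hrow : ∀ t, Summable fun s => γ^t * (d t s * ρ s a) := fun t =>
      Summable.of_nonneg_of_le (hv0 a t)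
        (fun s => by
          have h1 : d t s * ρ s a ≤ d t s * 1 :=
            mul_le_mul_of_nonneg_left (rho_le_one hρ0 hρ1 s a) (hd0 t s)
          have := mul_le_mul_of_nonneg_left h1 (pow_nonneg hγ0 t)
          simpa using this)
        (((hd1 t).summable).mul_left (γ^t))
    have hcol : Summable fun t => ∑' s, γ^t * (d t s * ρ s a) := by
      apply Summable.of_nonneg_of_le (fun t => tsum_nonneg fun s => hv0 a t s)
        (fun t => ?_) (summable_geometric_of_lt_one hγ0 hγ1)
      calc ∑' s, γ^t * (d t s * ρ s a) ≤ ∑' s, γ^t * d t s := by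
            apply Summable.tsum_le_tsum (fun s => ?_) (hrow t) (((hd1 t).summable).mul_left (γ^t))
            have h1 : d t s * ρ s a ≤ d t s * 1 :=
              mul_le_mul_of_nonneg_left (rho_le_one hρ0 hρ1 s a) (hd0 t s)
            have := mul_le_mul_of_nonneg_left h1 (pow_nonneg hγ0 t)
            simpa using this
        _ = γ^t := by rw [tsum_mul_left, (hd1 t).tsum_eq, mul_one]
    obtain ⟨h1, h2, h3⟩ := fubini (hv0 a) hrow hcol
    have : (fun s => D s a) = fun s => (1-γ) * ∑' t, γ^t * (d t s * ρ s a) := by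
      funext s; exact hD s a
    rw [this]
    exact h2.mul_left _

lemma D_conv (γ : ℝ) (hγ0 : 0 ≤ γ) (hγ1 : γ < 1)
    (ρ : ℕ → 𝒜 → ℝ) (hρ0 : ∀ s a, 0 ≤ ρ s a) (hρ1 : ∀ s, ∑ a, ρ s a = 1)
    (d : ℕ → ℕ → ℝ) (hd0 : ∀ t s, 0 ≤ d t s) (hd1 : ∀ t, HasSum (d t) 1)
    (D : ℕ → 𝒜 → ℝ) (hD : ∀ s a, D s a = (1-γ) * ∑' t, γ^t * (d t s * ρ s a))
    (w : ℕ → 𝒜 → ℝ) (C : ℝ) (hw0 : ∀ s a, 0 ≤ w s a) (hwC : ∀ s a, w s a ≤ C) :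
    ∑' t, γ^t * ∑' s, d t s * ∑ a, ρ s a * w s a
      = (1/(1-γ)) * ∑' s, ∑ a, D s a * w s a := by
  have hγne : (1:ℝ) - γ ≠ 0 := by linarith
  have hC : 0 ≤ C := le_trans (hw0 0 (Classical.arbitrary 𝒜)) (hwC 0 (Classical.arbitrary 𝒜))
  set u : ℕ → ℕ → ℝ := fun t s => γ^t * (d t s * ∑ a, ρ s a * w s a) with hu
  have hwbar0 : ∀ s, 0 ≤ ∑ a, ρ s a * w s a :=
    fun s => Finset.sum_nonneg fun a _ => mul_nonneg (hρ0 s a) (hw0 s a)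
  have hwbarC : ∀ s, ∑ a, ρ s a * w s a ≤ C := by
    intro s
    calc ∑ a, ρ s a * w s a ≤ ∑ a, ρ s a * C :=
          Finset.sum_le_sum fun a _ => mul_le_mul_of_nonneg_left (hwC s a) (hρ0 s a)
      _ = C := by rw [← Finset.sum_mul, hρ1 s, one_mul]
  have hu0 : ∀ t s, 0 ≤ u t s :=
    fun t s => mul_nonneg (pow_nonneg hγ0 t) (mul_nonneg (hd0 t s) (hwbar0 s))
  have hrow : ∀ t, Summable (u t) := fun t =>
    Summable.of_nonneg_of_le (hu0 t)
      (fun s => by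
        have h1 : d t s * ∑ a, ρ s a * w s a ≤ d t s * C :=
          mul_le_mul_of_nonneg_left (hwbarC s) (hd0 t s)
        have := mul_le_mul_of_nonneg_left h1 (pow_nonneg hγ0 t)
        simpa [mul_assoc] using this)
      ((((hd1 t).summable).mul_right C).mul_left (γ^t))
  have hucolval : ∀ t, ∑' s, u t s ≤ γ^t * C := by
    intro t
    calc ∑' s, u t s ≤ ∑' s, γ^t * (d t s * C) :=
          Summable.tsum_le_tsum (fun s => by
            exact mul_le_mul_of_nonneg_left
              (mul_le_mul_of_nonneg_left (hwbarC s) (hd0 t s)) (pow_nonneg hγ0 t))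
            (hrow t) ((((hd1 t).summable).mul_right C).mul_left (γ^t))
      _ = γ^t * C := by
          rw [tsum_mul_left, tsum_mul_right, (hd1 t).tsum_eq, one_mul]
  have hcol : Summable fun t => ∑' s, u t s :=
    Summable.of_nonneg_of_le (fun t => tsum_nonneg (hu0 t)) hucolval
      ((summable_geometric_of_lt_one hγ0 hγ1).mul_right C)
  obtain ⟨h1, h2, h3⟩ := fubini hu0 hrow hcol
  have hrho1 : ∀ s a, ρ s a ≤ 1 := rho_le_one hρ0 hρ1
  have hd1' : ∀ t s, d t s ≤ 1 := fun t => dle1 (hd0 t) (hd1 t)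
  -- inner rewrite of the D sum
  have key : ∀ s, ∑ a, D s a * w s a = (1-γ) * ∑' t, u t s := by
    intro s
    have hterm : ∀ a : 𝒜, Summable fun t => γ^t * (d t s * ρ s a) * w s a := by
      intro a
      apply Summable.of_nonneg_of_le
        (fun t => mul_nonneg (mul_nonneg (pow_nonneg hγ0 t)
          (mul_nonneg (hd0 t s) (hρ0 s a))) (hw0 s a))
        (fun t => ?_) ((summable_geometric_of_lt_one hγ0 hγ1).mul_right C)
      have h1 : d t s * ρ s a ≤ 1 :=
        mul_le_one₀ (hd1' t s) (hρ0 s a) (hrho1 s a)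
      calc γ^t * (d t s * ρ s a) * w s a ≤ γ^t * 1 * C := by
            apply mul_le_mul (mul_le_mul_of_nonneg_left h1 (pow_nonneg hγ0 t))
              (hwC s a) (hw0 s a)
            positivity
        _ = γ^t * C := by ring
    calc ∑ a, D s a * w s a
        = ∑ a, (1-γ) * ∑' t, γ^t * (d t s * ρ s a) * w s a := by
          apply Finset.sum_congr rfl; intro a _
          rw [hD s a, mul_assoc]
          congr 1
          rw [← tsum_mul_right]
      _ = (1-γ) * ∑ a, ∑' t, γ^t * (d t s * ρ s a) * w s a := by
          rw [Finset.mul_sum]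
      _ = (1-γ) * ∑' t, ∑ a, γ^t * (d t s * ρ s a) * w s a := by
          rw [Summable.tsum_finsetSum (fun a _ => hterm a)]
      _ = (1-γ) * ∑' t, u t s := by
          congr 1
          apply tsum_congr; intro t
          show _ = γ ^ t * (d t s * ∑ a, ρ s a * w s a)
          rw [Finset.mul_sum, Finset.mul_sum]
          apply Finset.sum_congr rfl; intro a _; ring
  calc ∑' t, γ^t * ∑' s, d t s * ∑ a, ρ s a * w s a
      = ∑' t, ∑' s, u t s := by
        congr 1; funext t
        rw [hu, ← tsum_mul_left]
    _ = ∑' s, ∑' t, u t s := h3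
    _ = (1/(1-γ)) * ∑' s, ∑ a, D s a * w s a := by
        rw [← tsum_mul_left]
        congr 1; funext s
        rw [key s, ← mul_assoc]
        field_simp
end DPart
end S15
section Policy
variable {𝒜 : Type*} [Fintype 𝒜] [Nonempty 𝒜]

lemma summable_mul_bdd {d : ℕ → ℝ} (hd0 : ∀ s, 0 ≤ d s) (hd : Summable d)
    {X : ℕ → ℝ} {C : ℝ} (hX : ∀ s, |X s| ≤ C) : Summable fun s => d s * X s := by
  apply Summable.of_abs
  apply Summable.of_nonneg_of_le (fun s => abs_nonneg _) (fun s => ?_) (hd.mul_right C)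
  rw [abs_mul, abs_of_nonneg (hd0 s)]
  exact mul_le_mul_of_nonneg_left (hX s) (hd0 s)

lemma tsum_d_le {d : ℕ → ℝ} (hd0 : ∀ s, 0 ≤ d s) (hd : HasSum d 1)
    {X : ℕ → ℝ} {C : ℝ} (hX : ∀ s, X s ≤ C) (hsX : Summable fun s => d s * X s) :
    ∑' s, d s * X s ≤ C := by
  have : ∑' s, d s * X s ≤ ∑' s, d s * C :=
    Summable.tsum_le_tsum (fun s => mul_le_mul_of_nonneg_left (hX s) (hd0 s)) hsX
      (hd.summable.mul_right C)
  rwa [tsum_mul_right, hd.tsum_eq, one_mul] at this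

lemma policy_both (γ Rmax Vmax : ℝ) (hγ0 : 0 ≤ γ) (hγ1 : γ < 1) (hR : 0 ≤ Rmax)
    (r : ℕ → 𝒜 → ℝ) (hr : ∀ s a, r s a ∈ Set.Icc (0:ℝ) Rmax)
    (p : ℕ → 𝒜 → ℕ → ℝ) (hp0 : ∀ s a j, 0 ≤ p s a j) (hp1 : ∀ s a, HasSum (p s a) 1)
    (H : ℕ → ℝ) (hH : ∀ s, H s ∈ Set.Icc (0:ℝ) Vmax)
    (G : ℕ → 𝒜 → ℝ) (hG : ∀ s a, G s a ∈ Set.Icc (0:ℝ) Vmax)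
    (ρ : ℕ → 𝒜 → ℝ) (hρ0 : ∀ s a, 0 ≤ ρ s a) (hρ1 : ∀ s, ∑ a, ρ s a = 1)
    (d : ℕ → ℕ → ℝ) (hd00 : ∀ s, 0 ≤ d 0 s) (hd01 : HasSum (d 0) 1)
    (hdrec : ∀ t s', d (t+1) s' = ∑' s, d t s * ∑ a, ρ s a * p s a s')
    (D : ℕ → 𝒜 → ℝ) (hD : ∀ s a, D s a = (1-γ) * ∑' t, γ^t * (d t s * ρ s a))
    (w : ℕ → 𝒜 → ℝ) (Cw : ℝ)
    (hwΔ : ∀ s a, |r s a + γ * (∑' s', p s a s' * H s') - G s a| ≤ w s a)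
    (hwC : ∀ s a, w s a ≤ Cw) :
    ((∀ s a, G s a ≤ H s) →
      ∑' t, γ^t * ∑' s, d t s * ∑ a, ρ s a * r s a
        ≤ (∑' s, d 0 s * H s) + (1/(1-γ)) * ∑' s, ∑ a, D s a * w s a) ∧
    ((∀ s, ∑ a, ρ s a * G s a = H s) →
      (∑' s, d 0 s * H s) - (1/(1-γ)) * ∑' s, ∑ a, D s a * w s a
        ≤ ∑' t, γ^t * ∑' s, d t s * ∑ a, ρ s a * r s a) ∧
    ((∀ s a, 0 ≤ D s a) ∧ ∀ a, Summable fun s => D s a) := by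
  have hVmax : (0:ℝ) ≤ Vmax := le_trans (hH 0).1 (hH 0).2
  -- the kernel
  set K : ℕ → ℕ → ℝ := fun s s' => ∑ a, ρ s a * p s a s' with hKdef
  have hK0 : ∀ s s', 0 ≤ K s s' :=
    fun s s' => Finset.sum_nonneg fun a _ => mul_nonneg (hρ0 s a) (hp0 s a s')
  have hK1 : ∀ s, HasSum (K s) 1 := by
    intro s
    have h := hasSum_sum (s := (Finset.univ : Finset 𝒜))
      (f := fun a s' => ρ s a * p s a s') (a := fun a => ρ s a * 1)
      (fun a _ => (hp1 s a).mul_left (ρ s a))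
    simpa [hρ1 s] using h
  have hrec' : ∀ t s', d (t+1) s' = ∑' s, d t s * K s s' := fun t s' => hdrec t s'
  have hd : ∀ t, (∀ s, 0 ≤ d t s) ∧ HasSum (d t) 1 :=
    S15.chain K hK0 hK1 d hd00 hd01 hrec'
  have hd0 : ∀ t s, 0 ≤ d t s := fun t => (hd t).1
  have hd1 : ∀ t, HasSum (d t) 1 := fun t => (hd t).2
  -- PH
  set PH : ℕ → 𝒜 → ℝ := fun s a => ∑' s', p s a s' * H s' with hPHdef
  have hpHsumm : ∀ s a, Summable fun s' => p s a s' * H s' := fun s a =>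
    Summable.of_nonneg_of_le (fun s' => mul_nonneg (hp0 s a s') (hH s').1)
      (fun s' => mul_le_mul_of_nonneg_left (hH s').2 (hp0 s a s'))
      ((hp1 s a).summable.mul_right Vmax)
  have hPH0 : ∀ s a, 0 ≤ PH s a :=
    fun s a => tsum_nonneg fun s' => mul_nonneg (hp0 s a s') (hH s').1
  have hPHV : ∀ s a, PH s a ≤ Vmax := by
    intro s a
    have : ∑' s', p s a s' * H s' ≤ ∑' s', p s a s' * Vmax :=
      Summable.tsum_le_tsum (fun s' => mul_le_mul_of_nonneg_left (hH s').2 (hp0 s a s'))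
        (hpHsumm s a) ((hp1 s a).summable.mul_right Vmax)
    rw [tsum_mul_right, (hp1 s a).tsum_eq, one_mul] at this
    exact this
  -- Δ and its bound
  set Δ : ℕ → 𝒜 → ℝ := fun s a => r s a + γ * PH s a - G s a with hΔdef
  set CΔ : ℝ := Rmax + 2 * Vmax with hCΔ
  have hΔabs : ∀ s a, |Δ s a| ≤ CΔ := by
    intro s a
    rw [abs_le]
    have h1 := (hr s a).1; have h2 := (hr s a).2
    have h3 := (hG s a).1; have h4 := (hG s a).2
    have h5 := hPH0 s a; have h6 := hPHV s a
    have h7 : 0 ≤ γ * PH s a := mul_nonneg hγ0 h5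
    have h8 : γ * PH s a ≤ Vmax := by
      calc γ * PH s a ≤ 1 * Vmax := by
            apply mul_le_mul (le_of_lt hγ1) h6 h5 zero_le_one
        _ = Vmax := one_mul _
    constructor <;> simp only [hΔdef, hCΔ] <;> nlinarith
  -- averaged quantities and their bounds
  have hrbar : ∀ s, |∑ a, ρ s a * r s a| ≤ Rmax := by
    intro s
    rw [abs_le]; constructor
    · have : (0:ℝ) ≤ ∑ a, ρ s a * r s a :=
        Finset.sum_nonneg fun a _ => mul_nonneg (hρ0 s a) (hr s a).1
      linarith
    · calc ∑ a, ρ s a * r s a ≤ ∑ a, ρ s a * Rmax :=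
            Finset.sum_le_sum fun a _ => mul_le_mul_of_nonneg_left (hr s a).2 (hρ0 s a)
        _ = Rmax := by rw [← Finset.sum_mul, hρ1 s, one_mul]
  have avg_bound : ∀ (X : ℕ → 𝒜 → ℝ) (C : ℝ), (∀ s a, |X s a| ≤ C) →
      ∀ s, |∑ a, ρ s a * X s a| ≤ C := by
    intro X C hX s
    have hC : 0 ≤ C := le_trans (abs_nonneg _) (hX 0 (Classical.arbitrary 𝒜))
    calc |∑ a, ρ s a * X s a| ≤ ∑ a, |ρ s a * X s a| := Finset.abs_sum_le_sum_abs _ _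
      _ ≤ ∑ a, ρ s a * C := by
          apply Finset.sum_le_sum; intro a _
          rw [abs_mul, abs_of_nonneg (hρ0 s a)]
          exact mul_le_mul_of_nonneg_left (hX s a) (hρ0 s a)
      _ = C := by rw [← Finset.sum_mul, hρ1 s, one_mul]
  have hΔbar : ∀ s, |∑ a, ρ s a * Δ s a| ≤ CΔ := avg_bound Δ CΔ hΔabs
  have hGbar : ∀ s, |∑ a, ρ s a * G s a| ≤ Vmax :=
    avg_bound G Vmax fun s a => abs_le.mpr ⟨by linarith [(hG s a).1], (hG s a).2⟩
  have hPHbar : ∀ s, |∑ a, ρ s a * PH s a| ≤ Vmax :=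
    avg_bound PH Vmax fun s a => abs_le.mpr ⟨by linarith [hPH0 s a], hPHV s a⟩
  have hwbar : ∀ s, |∑ a, ρ s a * w s a| ≤ Cw :=
    avg_bound w Cw fun s a => abs_le.mpr
      ⟨by linarith [le_trans (abs_nonneg _) (hwΔ s a), hwC s a], hwC s a⟩
  -- sequences
  set A : ℕ → ℝ := fun t => ∑' s, d t s * ∑ a, ρ s a * r s a with hA
  set B : ℕ → ℝ := fun t => ∑' s, d t s * ∑ a, ρ s a * Δ s a with hB
  set Gb : ℕ → ℝ := fun t => ∑' s, d t s * ∑ a, ρ s a * G s a with hGb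
  set Wb : ℕ → ℝ := fun t => ∑' s, d t s * ∑ a, ρ s a * w s a with hWb
  set Hb : ℕ → ℝ := fun t => ∑' s, d t s * H s with hHb
  have hAsumm : ∀ t, Summable fun s => d t s * ∑ a, ρ s a * r s a :=
    fun t => summable_mul_bdd (hd0 t) (hd1 t).summable hrbar
  have hBsumm : ∀ t, Summable fun s => d t s * ∑ a, ρ s a * Δ s a :=
    fun t => summable_mul_bdd (hd0 t) (hd1 t).summable hΔbar
  have hGsumm : ∀ t, Summable fun s => d t s * ∑ a, ρ s a * G s a :=
    fun t => summable_mul_bdd (hd0 t) (hd1 t).summable hGbar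
  have hPHbsumm : ∀ t, Summable fun s => d t s * ∑ a, ρ s a * PH s a :=
    fun t => summable_mul_bdd (hd0 t) (hd1 t).summable hPHbar
  have hHsumm : ∀ t, Summable fun s => d t s * H s :=
    fun t => summable_mul_bdd (hd0 t) (hd1 t).summable
      (fun s => abs_le.mpr ⟨by linarith [(hH s).1], (hH s).2⟩)
  -- step identity: ⟨d_{t+1}, H⟩ = ⟨d_t, ρ·PH⟩
  have hKH : ∀ s, ∑' s', K s s' * H s' = ∑ a, ρ s a * PH s a := by
    intro s
    have hsummA : ∀ a : 𝒜, Summable fun s' => ρ s a * (p s a s' * H s') :=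
      fun a => (hpHsumm s a).mul_left _
    calc ∑' s', K s s' * H s'
        = ∑' s', ∑ a, ρ s a * (p s a s' * H s') := by
          apply tsum_congr; intro s'
          rw [hKdef]
          rw [Finset.sum_mul]
          apply Finset.sum_congr rfl; intro a _; ring
      _ = ∑ a, ∑' s', ρ s a * (p s a s' * H s') := Summable.tsum_finsetSum fun a _ => hsummA a
      _ = ∑ a, ρ s a * PH s a := by
          apply Finset.sum_congr rfl; intro a _
          rw [tsum_mul_left]
  have hstep : ∀ t, Hb (t+1) = ∑' s, d t s * ∑ a, ρ s a * PH s a := by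
    intro t
    have h1 : Hb (t+1) = ∑' s', (∑' s, d t s * K s s') * H s' := by
      rw [hHb]
      apply tsum_congr; intro s'
      rw [hrec' t s']
    rw [h1, S15.step K hK0 hK1 (d t) (hd0 t) (hd1 t).summable H Vmax
      (fun s => (hH s).1) (fun s => (hH s).2)]
    apply tsum_congr; intro s
    rw [hKH s]
  -- per-step identity
  have claim1 : ∀ t, A t = B t + Gb t - γ * Hb (t+1) := by
    intro t
    have hpt : ∀ s, d t s * ∑ a, ρ s a * r s a
        = d t s * ∑ a, ρ s a * Δ s a + d t s * ∑ a, ρ s a * G s a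
          - γ * (d t s * ∑ a, ρ s a * PH s a) := by
      intro s
      have : ∑ a, ρ s a * r s a
          = ∑ a, ρ s a * Δ s a + ∑ a, ρ s a * G s a - γ * ∑ a, ρ s a * PH s a := by
        rw [Finset.mul_sum, ← Finset.sum_add_distrib, ← Finset.sum_sub_distrib]
        apply Finset.sum_congr rfl; intro a _
        simp only [hΔdef]; ring
      rw [this]; ring
    rw [hA, hstep t]
    calc ∑' s, d t s * ∑ a, ρ s a * r s a
        = ∑' s, (d t s * ∑ a, ρ s a * Δ s a + d t s * ∑ a, ρ s a * G s a
          - γ * (d t s * ∑ a, ρ s a * PH s a)) := tsum_congr hpt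
      _ = B t + Gb t - γ * ∑' s, d t s * ∑ a, ρ s a * PH s a := by
          rw [Summable.tsum_sub (Summable.add (hBsumm t) (hGsumm t)) ((hPHbsumm t).mul_left γ),
            Summable.tsum_add (hBsumm t) (hGsumm t), tsum_mul_left]
  -- abs bound helper for ⟨d,·⟩
  have abs_tsum_d : ∀ (dd : ℕ → ℝ), (∀ s, 0 ≤ dd s) → HasSum dd 1 →
      ∀ (X : ℕ → ℝ) (C : ℝ), (∀ s, |X s| ≤ C) → Summable (fun s => dd s * X s) →
      |∑' s, dd s * X s| ≤ C := by
    intro dd h0 h1 X C hX hsX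
    rw [abs_le]
    constructor
    · have : ∑' s, dd s * (-C) ≤ ∑' s, dd s * X s :=
        Summable.tsum_le_tsum (fun s => mul_le_mul_of_nonneg_left (neg_le_of_abs_le (hX s)) (h0 s))
          (h1.summable.mul_right _) hsX
      rwa [tsum_mul_right, h1.tsum_eq, one_mul] at this
    · exact tsum_d_le h0 h1 (fun s => (abs_le.1 (hX s)).2) hsX
  have hAabs : ∀ t, |A t| ≤ Rmax :=
    fun t => abs_tsum_d (d t) (hd0 t) (hd1 t) _ _ hrbar (hAsumm t)
  have hBabs : ∀ t, |B t| ≤ CΔ :=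
    fun t => abs_tsum_d (d t) (hd0 t) (hd1 t) _ _ hΔbar (hBsumm t)
  have hGbabs : ∀ t, |Gb t| ≤ Vmax :=
    fun t => abs_tsum_d (d t) (hd0 t) (hd1 t) _ _ hGbar (hGsumm t)
  have hWsumm : ∀ t, Summable fun s => d t s * ∑ a, ρ s a * w s a :=
    fun t => summable_mul_bdd (hd0 t) (hd1 t).summable hwbar
  have hWbabs : ∀ t, |Wb t| ≤ Cw :=
    fun t => abs_tsum_d (d t) (hd0 t) (hd1 t) _ _ hwbar (hWsumm t)
  have hHbabs : ∀ t, |Hb t| ≤ Vmax :=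
    fun t => abs_tsum_d (d t) (hd0 t) (hd1 t) _ _
      (fun s => abs_le.mpr ⟨by linarith [(hH s).1], (hH s).2⟩) (hHsumm t)
  -- geometric-dominated summability
  have geo_summ : ∀ (F : ℕ → ℝ) (C : ℝ), (∀ t, |F t| ≤ C) →
      Summable (fun t => γ^t * F t) := by
    intro F C hF
    apply Summable.of_abs
    apply Summable.of_nonneg_of_le (fun t => abs_nonneg _) (fun t => ?_)
      ((summable_geometric_of_lt_one hγ0 hγ1).mul_right C)
    rw [abs_mul, abs_pow, abs_of_nonneg hγ0]
    exact mul_le_mul_of_nonneg_left (hF t) (pow_nonneg hγ0 t)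
  have sA : Summable fun t => γ^t * A t := geo_summ A Rmax hAabs
  have sB : Summable fun t => γ^t * B t := geo_summ B CΔ hBabs
  have sWb : Summable fun t => γ^t * Wb t := geo_summ Wb Cw hWbabs
  have sHb : Summable fun t => γ^t * Hb t := geo_summ Hb Vmax hHbabs
  have sHb' : Summable fun t => γ^(t+1) * Hb (t+1) :=
    (summable_nat_add_iff 1).mpr sHb
  have sL : Summable fun t => γ^t * (Hb t - Gb t) :=
    geo_summ _ (2*Vmax) (fun t => by
      have := abs_sub (Hb t) (Gb t)
      calc |Hb t - Gb t| ≤ |Hb t| + |Gb t| := abs_sub _ _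
        _ ≤ 2*Vmax := by linarith [hHbabs t, hGbabs t])
  -- telescoping
  have htel : ∑' t, (γ^t * Hb t - γ^(t+1) * Hb (t+1)) = Hb 0 := by
    rw [Summable.tsum_sub sHb sHb']
    have h := Summable.tsum_eq_zero_add sHb
    simp only [pow_zero, one_mul] at h
    linarith
  -- the master identity
  have hident : ∑' t, γ^t * A t
      = (∑' t, γ^t * B t) + Hb 0 - ∑' t, γ^t * (Hb t - Gb t) := by
    have hpt : ∀ t, γ^t * A t
        = γ^t * B t + (γ^t * Hb t - γ^(t+1) * Hb (t+1)) - γ^t * (Hb t - Gb t) := by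
      intro t
      rw [claim1 t]; ring
    calc ∑' t, γ^t * A t
        = ∑' t, (γ^t * B t + (γ^t * Hb t - γ^(t+1) * Hb (t+1))
            - γ^t * (Hb t - Gb t)) := tsum_congr hpt
      _ = (∑' t, γ^t * B t) + Hb 0 - ∑' t, γ^t * (Hb t - Gb t) := by
          rw [Summable.tsum_sub (sB.add (sHb.sub sHb')) sL,
            Summable.tsum_add sB (sHb.sub sHb'), Summable.tsum_sub sHb sHb']
          have h := Summable.tsum_eq_zero_add sHb
          simp only [pow_zero, one_mul] at h
          linarith
  have hJ : (∑' t, γ^t * ∑' s, d t s * ∑ a, ρ s a * r s a)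
      = (∑' t, γ^t * B t) + Hb 0 - ∑' t, γ^t * (Hb t - Gb t) := hident
  have hDconv : ∑' t, γ^t * Wb t = (1/(1-γ)) * ∑' s, ∑ a, D s a * w s a := by
    have := S15.D_conv γ hγ0 hγ1 ρ hρ0 hρ1 d hd0 hd1 D hD w Cw
      (fun s a => le_trans (abs_nonneg _) (hwΔ s a)) hwC
    exact this
  have hHb0 : Hb 0 = ∑' s, d 0 s * H s := rfl
  refine ⟨?_, ?_, S15.D_props γ hγ0 hγ1 ρ hρ0 hρ1 d hd0 hd1 D hD⟩
  · -- upper bound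
    intro hGle
    have hLnn : 0 ≤ ∑' t, γ^t * (Hb t - Gb t) := by
      apply tsum_nonneg; intro t
      apply mul_nonneg (pow_nonneg hγ0 t)
      have : Gb t ≤ Hb t := by
        apply Summable.tsum_le_tsum (fun s => ?_) (hGsumm t) (hHsumm t)
        apply mul_le_mul_of_nonneg_left ?_ (hd0 t s)
        calc ∑ a, ρ s a * G s a ≤ ∑ a, ρ s a * H s :=
              Finset.sum_le_sum fun a _ =>
                mul_le_mul_of_nonneg_left (hGle s a) (hρ0 s a)
          _ = H s := by rw [← Finset.sum_mul, hρ1 s, one_mul]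
      linarith
    have hTle : (∑' t, γ^t * B t) ≤ ∑' t, γ^t * Wb t := by
      apply Summable.tsum_le_tsum (fun t => ?_) sB sWb
      apply mul_le_mul_of_nonneg_left ?_ (pow_nonneg hγ0 t)
      apply Summable.tsum_le_tsum (fun s => ?_) (hBsumm t) (hWsumm t)
      apply mul_le_mul_of_nonneg_left ?_ (hd0 t s)
      apply Finset.sum_le_sum; intro a _
      exact mul_le_mul_of_nonneg_left
        (le_trans (le_abs_self _) (hwΔ s a)) (hρ0 s a)
    rw [hJ, ← hDconv, ← hHb0]
    linarith
  · -- lower bound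
    intro hGeq
    have hLzero : (∑' t, γ^t * (Hb t - Gb t)) = 0 := by
      have : ∀ t, γ^t * (Hb t - Gb t) = 0 := by
        intro t
        have : Gb t = Hb t := by
          apply tsum_congr; intro s
          rw [hGeq s]
        rw [this]; ring
      rw [tsum_congr this, tsum_zero]
    have hTge : -(∑' t, γ^t * Wb t) ≤ ∑' t, γ^t * B t := by
      rw [← tsum_neg]
      apply Summable.tsum_le_tsum (fun t => ?_) sWb.neg sB
      have h1 : -Wb t ≤ B t := by
        have h2 : -Wb t = ∑' s, d t s * (-(∑ a, ρ s a * w s a)) := by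
          rw [← tsum_neg]
          apply tsum_congr; intro s; ring
        have hinner : ∀ s, d t s * (-(∑ a, ρ s a * w s a))
            ≤ d t s * ∑ a, ρ s a * Δ s a := by
          intro s
          apply mul_le_mul_of_nonneg_left ?_ (hd0 t s)
          rw [← Finset.sum_neg_distrib]
          apply Finset.sum_le_sum; intro a _
          rw [← mul_neg]
          exact mul_le_mul_of_nonneg_left
            (neg_le_of_abs_le (hwΔ s a)) (hρ0 s a)
        have h3 : Summable fun s => d t s * (-(∑ a, ρ s a * w s a)) := by
          have := (hWsumm t).neg
          simpa [mul_neg] using this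
        rw [h2]
        exact Summable.tsum_le_tsum hinner h3 (hBsumm t)
      calc -(γ^t * Wb t) = γ^t * (-Wb t) := by ring
        _ ≤ γ^t * B t := mul_le_mul_of_nonneg_left h1 (pow_nonneg hγ0 t)
    rw [hJ, ← hDconv, ← hHb0, hLzero]
    linarith

end Policy
section Abs
variable {𝒜 Sφ : Type*} [Fintype 𝒜] [Nonempty 𝒜] [Fintype Sφ] [Nonempty Sφ]
open Finset

lemma g_bounds (γ Rmax Vmax : ℝ) (hγ0 : 0 ≤ γ) (hγ1 : γ < 1) (hR : 0 ≤ Rmax)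
    (hV : Vmax = Rmax / (1 - γ))
    (rtr : Sφ → 𝒜 → ℝ) (hrtr : ∀ x a, rtr x a ∈ Set.Icc (0:ℝ) Rmax)
    (Ptr : Sφ → 𝒜 → Sφ → ℝ)
    (hPtr0 : ∀ x a x', 0 ≤ Ptr x a x') (hPtr1 : ∀ x a, ∑ x', Ptr x a x' = 1)
    (g : Sφ → 𝒜 → ℝ)
    (hg : ∀ x a, g x a = rtr x a + γ * ∑ x', Ptr x a x' *
        (Finset.univ.sup' Finset.univ_nonempty fun a' => g x' a')) :
    ∀ x a, g x a ∈ Set.Icc (0:ℝ) Vmax := by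
  have hγpos : (0:ℝ) < 1 - γ := by linarith
  set h : Sφ → ℝ := fun x => Finset.univ.sup' Finset.univ_nonempty fun a' => g x a'
    with hh
  set M : ℝ := Finset.univ.sup' Finset.univ_nonempty h with hM
  set m : ℝ := Finset.univ.inf' Finset.univ_nonempty fun q : Sφ × 𝒜 => g q.1 q.2
    with hm
  have hfold : ∀ x : Sφ, (Finset.univ.sup' Finset.univ_nonempty fun a' => g x a') = h x :=
    fun x => rfl
  have hgh : ∀ x a, g x a ≤ h x := fun x a =>
    Finset.le_sup' (fun a' => g x a') (mem_univ a)
  have hhM : ∀ x, h x ≤ M := fun x => Finset.le_sup' h (mem_univ x)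
  have hmg : ∀ x a, m ≤ g x a := fun x a =>
    Finset.inf'_le (fun q : Sφ × 𝒜 => g q.1 q.2) (mem_univ (x, a))
  have hmh : ∀ x, m ≤ h x := fun x =>
    le_trans (hmg x (Classical.arbitrary 𝒜)) (hgh x _)
  -- M ≤ Vmax
  have hMle : M ≤ Vmax := by
    obtain ⟨x₀, -, hx₀⟩ := Finset.exists_mem_eq_sup' Finset.univ_nonempty h
    obtain ⟨a₀, -, ha₀⟩ := Finset.exists_mem_eq_sup' Finset.univ_nonempty
      fun a' => g x₀ a'
    have hMg : M = g x₀ a₀ := by rw [hM, hx₀]; exact ha₀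
    have hsum : ∑ x', Ptr x₀ a₀ x' *
        (Finset.univ.sup' Finset.univ_nonempty fun a' => g x' a') ≤ M := by
      calc ∑ x', Ptr x₀ a₀ x' *
            (Finset.univ.sup' Finset.univ_nonempty fun a' => g x' a')
          ≤ ∑ x', Ptr x₀ a₀ x' * M :=
            Finset.sum_le_sum fun x' _ =>
              mul_le_mul_of_nonneg_left (hhM x') (hPtr0 x₀ a₀ x')
        _ = M := by rw [← Finset.sum_mul, hPtr1, one_mul]
    have : M ≤ Rmax + γ * M := by
      conv_lhs => rw [hMg, hg x₀ a₀]
      have := mul_le_mul_of_nonneg_left hsum hγ0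
      have h2 := (hrtr x₀ a₀).2
      linarith
    rw [hV, le_div_iff₀ hγpos]
    nlinarith
  -- 0 ≤ m
  have hmge : 0 ≤ m := by
    obtain ⟨q₁, -, hq₁⟩ := Finset.exists_mem_eq_inf' Finset.univ_nonempty
      fun q : Sφ × 𝒜 => g q.1 q.2
    have hsum : m ≤ ∑ x', Ptr q₁.1 q₁.2 x' *
        (Finset.univ.sup' Finset.univ_nonempty fun a' => g x' a') := by
      calc m = ∑ x', Ptr q₁.1 q₁.2 x' * m := by
            rw [← Finset.sum_mul, hPtr1, one_mul]
        _ ≤ ∑ x', Ptr q₁.1 q₁.2 x' *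
            (Finset.univ.sup' Finset.univ_nonempty fun a' => g x' a') :=
            Finset.sum_le_sum fun x' _ =>
              mul_le_mul_of_nonneg_left (hmh x') (hPtr0 q₁.1 q₁.2 x')
    have : γ * m ≤ m := by
      have hq₁' : m = g q₁.1 q₁.2 := by rw [hm, hq₁]
      conv_rhs => rw [hq₁', hg q₁.1 q₁.2]
      have := mul_le_mul_of_nonneg_left hsum hγ0
      have h1 := (hrtr q₁.1 q₁.2).1
      linarith
    nlinarith
  intro x a
  exact ⟨le_trans hmge (hmg x a), le_trans (le_trans (hgh x a) (hhM x)) hMle⟩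

lemma row_bound_s15 (Vmax : ℝ) (u v h : Sφ → ℝ)
    (hu : ∑ x, u x = 1) (hv : ∑ x, v x = 1)
    (hh : ∀ x, h x ∈ Set.Icc (0:ℝ) Vmax) :
    |∑ x, u x * h x - ∑ x, v x * h x| ≤ Vmax/2 * ∑ x, |u x - v x| := by
  have key : ∑ x, u x * h x - ∑ x, v x * h x
      = ∑ x, (u x - v x) * (h x - Vmax/2) := by
    have : ∀ x ∈ Finset.univ, (u x - v x) * (h x - Vmax/2)
        = (u x * h x - v x * h x) - (Vmax/2) * (u x - v x) := fun x _ => by ring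
    rw [Finset.sum_congr rfl this, Finset.sum_sub_distrib, Finset.sum_sub_distrib,
      ← Finset.mul_sum, Finset.sum_sub_distrib, hu, hv]
    ring
  rw [key]
  calc |∑ x, (u x - v x) * (h x - Vmax/2)|
      ≤ ∑ x, |(u x - v x) * (h x - Vmax/2)| := Finset.abs_sum_le_sum_abs _ _
    _ ≤ ∑ x, |u x - v x| * (Vmax/2) := by
        apply Finset.sum_le_sum; intro x _
        rw [abs_mul]
        apply mul_le_mul_of_nonneg_left ?_ (abs_nonneg _)
        rw [abs_le]
        constructor <;> [linarith [(hh x).1]; linarith [(hh x).2]]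
    _ = Vmax/2 * ∑ x, |u x - v x| := by rw [← Finset.sum_mul]; ring
end Abs
section Fiber
variable {𝒜 Sφ : Type*} [Fintype 𝒜] [Nonempty 𝒜] [Fintype Sφ] [DecidableEq Sφ]
open Finset

lemma ind_summable (φ : ℕ → Sφ) {f : ℕ → ℝ} (hf : Summable f) (x : Sφ) :
    Summable fun j => if φ j = x then f j else 0 := by
  have : (fun j => if φ j = x then f j else 0)
      = Set.indicator {j | φ j = x} f := by
    funext j; simp [Set.indicator_apply, Set.mem_setOf_eq]
  rw [this]
  exact hf.indicator _

lemma fiber_tsum (φ : ℕ → Sφ) (f : ℕ → ℝ) (hf : Summable f) (c : Sφ → ℝ) :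
    ∑' j, f j * c (φ j) = ∑ x, (∑' j, if φ j = x then f j else 0) * c x := by
  have h1 : ∀ j, f j * c (φ j) = ∑ x, (if φ j = x then f j * c x else 0) := by
    intro j
    rw [Finset.sum_ite_eq univ (φ j) (fun x => f j * c x)]
    simp
  have hsummand : ∀ x : Sφ, Summable fun j => if φ j = x then f j * c x else 0 := by
    intro x
    have : (fun j => if φ j = x then f j * c x else 0)
        = fun j => (if φ j = x then f j else 0) * c x := by
      funext j; rw [ite_mul, zero_mul]
    rw [this]
    exact (ind_summable φ hf x).mul_right _
  rw [tsum_congr h1, Summable.tsum_finsetSum (fun x _ => hsummand x)]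
  apply Finset.sum_congr rfl; intro x _
  have : (fun j => if φ j = x then f j * c x else 0)
      = fun j => (if φ j = x then f j else 0) * c x := by
    funext j; rw [ite_mul, zero_mul]
  rw [this, tsum_mul_right]

lemma fiber_sum_one (φ : ℕ → Sφ) {f : ℕ → ℝ} (hf : HasSum f 1) :
    ∑ x, (∑' j, if φ j = x then f j else 0) = 1 := by
  have := fiber_tsum φ f hf.summable (fun _ => 1)
  simp only [mul_one] at this
  rw [← this, hf.tsum_eq]

lemma up_proj (φ : ℕ → Sφ) (D : ℕ → 𝒜 → ℝ) (hD0 : ∀ s a, 0 ≤ D s a)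
    (hD : ∀ a, Summable fun s => D s a)
    (c : Sφ → 𝒜 → ℝ) :
    ∑' s, ∑ a, D s a * c (φ s) a
      = ∑ x, ∑ a, (∑' s, if φ s = x then D s a else 0) * c x a := by
  have hCc : ∃ Cc : ℝ, ∀ x a, |c x a| ≤ Cc := by
    rcases isEmpty_or_nonempty Sφ with h | h
    · exact ⟨0, fun x a => (IsEmpty.false x).elim⟩
    · obtain ⟨Cc, hCc⟩ := Finite.exists_le fun q : Sφ × 𝒜 => |c q.1 q.2|
      exact ⟨Cc, fun x a => hCc (x, a)⟩
  obtain ⟨Cc, hCc⟩ := hCc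
  have hsa : ∀ a : 𝒜, Summable fun s => D s a * c (φ s) a := fun a =>
    summable_mul_bdd (fun s => hD0 s a) (hD a) (fun s => hCc (φ s) a)
  rw [Summable.tsum_finsetSum (fun a _ => hsa a)]
  rw [Finset.sum_comm]
  apply Finset.sum_congr rfl; intro a _
  exact fiber_tsum φ (fun s => D s a) (hD a) (fun x => c x a)
end Fiber
section Pair
variable {𝒜 Sφ : Type*} [Fintype 𝒜] [Nonempty 𝒜] [Fintype Sφ] [DecidableEq Sφ]
open Finset

lemma pairing_decomp (γ Rmax Vmax : ℝ) (hγ0 : 0 ≤ γ) (hVmax : 0 ≤ Vmax)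
    (hR : 0 ≤ Rmax) (φ : ℕ → Sφ)
    (r : ℕ → 𝒜 → ℝ) (hr : ∀ s a, r s a ∈ Set.Icc (0:ℝ) Rmax)
    (rtr rte : Sφ → 𝒜 → ℝ)
    (hrtr : ∀ x a, rtr x a ∈ Set.Icc (0:ℝ) Rmax)
    (hrte : ∀ x a, rte x a ∈ Set.Icc (0:ℝ) Rmax)
    (Ptr Pte : Sφ → 𝒜 → Sφ → ℝ)
    (hPtr0 : ∀ x a x', 0 ≤ Ptr x a x') (hPtr1 : ∀ x a, ∑ x', Ptr x a x' = 1)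
    (hPte0 : ∀ x a x', 0 ≤ Pte x a x') (hPte1 : ∀ x a, ∑ x', Pte x a x' = 1)
    (q : ℕ → 𝒜 → Sφ → ℝ) (hq0 : ∀ s a x, 0 ≤ q s a x)
    (hq1 : ∀ s a, ∑ x, q s a x = 1)
    (D : ℕ → 𝒜 → ℝ) (hD0 : ∀ s a, 0 ≤ D s a)
    (hDs : ∀ a, Summable fun s => D s a) :
    ∑' s, ∑ a, D s a * (|r s a - rte (φ s) a| + |rtr (φ s) a - rte (φ s) a|
        + γ/2 * Vmax * ∑ x, |q s a x - Pte (φ s) a x|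
        + γ/2 * Vmax * ∑ x', |Ptr (φ s) a x' - Pte (φ s) a x'|)
      = (((∑' s, ∑ a, D s a * |r s a - rte (φ s) a|)
          + γ/2 * Vmax * (∑' s, ∑ a, D s a * ∑ x, |q s a x - Pte (φ s) a x|))
        + ((∑ x, ∑ a, (∑' s, if φ s = x then D s a else 0) * |rtr x a - rte x a|)
          + γ/2 * Vmax * (∑ x, ∑ a, (∑' s, if φ s = x then D s a else 0) *
              ∑ x', |Ptr x a x' - Pte x a x'|))) := by
  set c : ℝ := γ/2 * Vmax with hc
  have hc0 : 0 ≤ c := by positivity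
  -- bounds
  have b1 : ∀ (u v : ℝ), u ∈ Set.Icc (0:ℝ) Rmax → v ∈ Set.Icc (0:ℝ) Rmax →
      |u - v| ≤ Rmax := by
    intro u v hu hv
    rw [abs_le]; constructor <;> [linarith [hu.2, hv.1, hu.1, hv.2];
      linarith [hu.2, hv.1]]
  have b3 : ∀ s a, ∑ x, |q s a x - Pte (φ s) a x| ≤ 2 := by
    intro s a
    calc ∑ x, |q s a x - Pte (φ s) a x| ≤ ∑ x, (q s a x + Pte (φ s) a x) := by
          apply Finset.sum_le_sum; intro x _
          rw [abs_le]; constructor <;>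
            [linarith [hq0 s a x, hPte0 (φ s) a x]; linarith [hq0 s a x, hPte0 (φ s) a x]]
      _ = 2 := by rw [Finset.sum_add_distrib, hq1 s a, hPte1 (φ s) a]; norm_num
  have b4 : ∀ (x : Sφ) a, ∑ x', |Ptr x a x' - Pte x a x'| ≤ 2 := by
    intro x a
    calc ∑ x', |Ptr x a x' - Pte x a x'| ≤ ∑ x', (Ptr x a x' + Pte x a x') := by
          apply Finset.sum_le_sum; intro x' _
          rw [abs_le]; constructor <;>
            [linarith [hPtr0 x a x', hPte0 x a x']; linarith [hPtr0 x a x', hPte0 x a x']]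
      _ = 2 := by rw [Finset.sum_add_distrib, hPtr1 x a, hPte1 x a]; norm_num
  -- summabilities
  have hS1 : ∀ a, Summable fun s => D s a * |r s a - rte (φ s) a| := fun a =>
    summable_mul_bdd (fun s => hD0 s a) (hDs a)
      (fun s => by rw [abs_abs]; exact b1 _ _ (hr s a) (hrte (φ s) a))
  have hS2 : ∀ a, Summable fun s => D s a * |rtr (φ s) a - rte (φ s) a| := fun a =>
    summable_mul_bdd (fun s => hD0 s a) (hDs a)
      (fun s => by rw [abs_abs]; exact b1 _ _ (hrtr (φ s) a) (hrte (φ s) a))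
  have hS3 : ∀ a, Summable fun s => D s a * ∑ x, |q s a x - Pte (φ s) a x| := fun a =>
    summable_mul_bdd (fun s => hD0 s a) (hDs a)
      (fun s => by
        rw [abs_of_nonneg (Finset.sum_nonneg fun x _ => abs_nonneg _)]
        exact b3 s a)
  have hS4 : ∀ a, Summable fun s => D s a * ∑ x', |Ptr (φ s) a x' - Pte (φ s) a x'| :=
    fun a => summable_mul_bdd (fun s => hD0 s a) (hDs a)
      (fun s => by
        rw [abs_of_nonneg (Finset.sum_nonneg fun x _ => abs_nonneg _)]
        exact b4 (φ s) a)
  have SA : Summable fun s => ∑ a, D s a * |r s a - rte (φ s) a| :=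
    summable_sum fun a _ => hS1 a
  have SB : Summable fun s => ∑ a, D s a * |rtr (φ s) a - rte (φ s) a| :=
    summable_sum fun a _ => hS2 a
  have SC : Summable fun s => ∑ a, D s a * ∑ x, |q s a x - Pte (φ s) a x| :=
    summable_sum fun a _ => hS3 a
  have SE : Summable fun s => ∑ a, D s a * ∑ x', |Ptr (φ s) a x' - Pte (φ s) a x'| :=
    summable_sum fun a _ => hS4 a
  -- pointwise split
  have key : ∀ s, ∑ a, D s a * (|r s a - rte (φ s) a| + |rtr (φ s) a - rte (φ s) a|
        + c * ∑ x, |q s a x - Pte (φ s) a x|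
        + c * ∑ x', |Ptr (φ s) a x' - Pte (φ s) a x'|)
      = (∑ a, D s a * |r s a - rte (φ s) a|)
        + ((∑ a, D s a * |rtr (φ s) a - rte (φ s) a|)
        + (c * (∑ a, D s a * ∑ x, |q s a x - Pte (φ s) a x|)
        + c * (∑ a, D s a * ∑ x', |Ptr (φ s) a x' - Pte (φ s) a x'|))) := by
    intro s
    rw [Finset.mul_sum, Finset.mul_sum, ← Finset.sum_add_distrib,
      ← Finset.sum_add_distrib, ← Finset.sum_add_distrib]
    apply Finset.sum_congr rfl; intro a _; ring
  calc ∑' s, ∑ a, D s a * (|r s a - rte (φ s) a| + |rtr (φ s) a - rte (φ s) a|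
        + c * ∑ x, |q s a x - Pte (φ s) a x|
        + c * ∑ x', |Ptr (φ s) a x' - Pte (φ s) a x'|)
      = ∑' s, ((∑ a, D s a * |r s a - rte (φ s) a|)
        + ((∑ a, D s a * |rtr (φ s) a - rte (φ s) a|)
        + (c * (∑ a, D s a * ∑ x, |q s a x - Pte (φ s) a x|)
        + c * (∑ a, D s a * ∑ x', |Ptr (φ s) a x' - Pte (φ s) a x'|)))) :=
        tsum_congr key
    _ = (∑' s, ∑ a, D s a * |r s a - rte (φ s) a|)
        + ((∑' s, ∑ a, D s a * |rtr (φ s) a - rte (φ s) a|)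
        + (c * (∑' s, ∑ a, D s a * ∑ x, |q s a x - Pte (φ s) a x|)
        + c * (∑' s, ∑ a, D s a * ∑ x', |Ptr (φ s) a x' - Pte (φ s) a x'|))) := by
        rw [Summable.tsum_add SA (SB.add ((SC.mul_left c).add (SE.mul_left c))),
          Summable.tsum_add SB ((SC.mul_left c).add (SE.mul_left c)),
          Summable.tsum_add (SC.mul_left c) (SE.mul_left c), tsum_mul_left, tsum_mul_left]
    _ = _ := by
        have hTB : (∑' s, ∑ a, D s a * |rtr (φ s) a - rte (φ s) a|)
            = ∑ x, ∑ a, (∑' s, if φ s = x then D s a else 0) * |rtr x a - rte x a| :=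
          up_proj φ D hD0 hDs fun x a => |rtr x a - rte x a|
        have hTE : (∑' s, ∑ a, D s a * ∑ x', |Ptr (φ s) a x' - Pte (φ s) a x'|)
            = ∑ x, ∑ a, (∑' s, if φ s = x then D s a else 0) *
                ∑ x', |Ptr x a x' - Pte x a x'| :=
          up_proj φ D hD0 hDs fun x a => ∑ x', |Ptr x a x' - Pte x a x'|
        rw [hTB, hTE]
        ring
end Pair
/-- Out-of-distribution generalization bound for POMDPs: the test-task performance
gap between any policy `π` and the abstract policy `πφ` (greedy for the optimal
fixed point `g` of the abstract *training* MDP `(rtr, Ptr)`) is bounded by the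
approximation errors of the abstraction with respect to the abstract *test* MDP
`(rte, Pte)` plus the OOD estimation errors between the abstract training and test
MDPs, measured in the (up-projected) successor-representation-weighted norms of
both policies. Here `dπ t` (resp. `dφ t`) is the state distribution at time `t+1`
under `π` (resp. `πφ`), started from the test start distribution `d₀`. -/
theorem stmt15 {𝒜 Sφ : Type*} [Fintype 𝒜] [Nonempty 𝒜] [DecidableEq 𝒜]
    [Fintype Sφ] [DecidableEq Sφ]
    (γ Rmax Vmax : ℝ) (hγ0 : 0 ≤ γ) (hγ1 : γ < 1) (hR : 0 ≤ Rmax)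
    (hV : Vmax = Rmax / (1 - γ))
    (r : ℕ → 𝒜 → ℝ) (hr : ∀ s a, r s a ∈ Set.Icc (0:ℝ) Rmax)
    (p : ℕ → 𝒜 → ℕ → ℝ)
    (hp0 : ∀ s a j, 0 ≤ p s a j) (hp1 : ∀ s a, HasSum (p s a) 1)
    (φ : ℕ → Sφ)
    (rtr rte : Sφ → 𝒜 → ℝ)
    (hrtr : ∀ x a, rtr x a ∈ Set.Icc (0:ℝ) Rmax)
    (hrte : ∀ x a, rte x a ∈ Set.Icc (0:ℝ) Rmax)
    (Ptr Pte : Sφ → 𝒜 → Sφ → ℝ)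
    (hPtr0 : ∀ x a x', 0 ≤ Ptr x a x') (hPtr1 : ∀ x a, ∑ x', Ptr x a x' = 1)
    (hPte0 : ∀ x a x', 0 ≤ Pte x a x') (hPte1 : ∀ x a, ∑ x', Pte x a x' = 1)
    (g : Sφ → 𝒜 → ℝ)
    (hg : ∀ x a, g x a = rtr x a + γ * ∑ x', Ptr x a x' *
        (Finset.univ.sup' Finset.univ_nonempty fun a' => g x' a'))
    (πφ : ℕ → 𝒜) (hgreedy : ∀ s a, g (φ s) a ≤ g (φ s) (πφ s))
    (π : ℕ → 𝒜 → ℝ) (hπ0 : ∀ s a, 0 ≤ π s a) (hπ1 : ∀ s, ∑ a, π s a = 1)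
    (d₀ : ℕ → ℝ) (hd₀0 : ∀ i, 0 ≤ d₀ i) (hd₀1 : HasSum d₀ 1)
    (dπ : ℕ → ℕ → ℝ) (hdπ0 : dπ 0 = d₀)
    (hdπrec : ∀ t s', dπ (t+1) s' = ∑' s, dπ t s * ∑ a, π s a * p s a s')
    (dφ : ℕ → ℕ → ℝ) (hdφ0 : dφ 0 = d₀)
    (hdφrec : ∀ t s', dφ (t+1) s' = ∑' s, dφ t s * p s (πφ s) s')
    -- the two normalized state-action successor representations
    (Dπ Dφ : ℕ → 𝒜 → ℝ)
    (hDπ : ∀ s a, Dπ s a = (1 - γ) * ∑' t, γ^t * (dπ t s * π s a))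
    (hDφ : ∀ s a, Dφ s a = (1 - γ) * ∑' t, γ^t *
        (dφ t s * (if a = πφ s then (1:ℝ) else 0))) :
    (∑' t, γ^t * ∑' s, dπ t s * ∑ a, π s a * r s a)
        - (∑' t, γ^t * ∑' s, dφ t s * r s (πφ s))
      ≤ (1 / (1 - γ)) *
        ((((∑' s, ∑ a, Dπ s a * |r s a - rte (φ s) a|)
            + (γ/2) * Vmax *
              (∑' s, ∑ a, Dπ s a *
                ∑ x : Sφ, |(∑' j, if φ j = x then p s a j else 0) - Pte (φ s) a x|))
          + ((∑ x : Sφ, ∑ a, (∑' s, if φ s = x then Dπ s a else 0) *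
                |rtr x a - rte x a|)
            + (γ/2) * Vmax *
              (∑ x : Sφ, ∑ a, (∑' s, if φ s = x then Dπ s a else 0) *
                ∑ x' : Sφ, |Ptr x a x' - Pte x a x'|)))
        + (((∑' s, ∑ a, Dφ s a * |r s a - rte (φ s) a|)
            + (γ/2) * Vmax *
              (∑' s, ∑ a, Dφ s a *
                ∑ x : Sφ, |(∑' j, if φ j = x then p s a j else 0) - Pte (φ s) a x|))
          + ((∑ x : Sφ, ∑ a, (∑' s, if φ s = x then Dφ s a else 0) *
                |rtr x a - rte x a|)
            + (γ/2) * Vmax *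
              (∑ x : Sφ, ∑ a, (∑' s, if φ s = x then Dφ s a else 0) *
                ∑ x' : Sφ, |Ptr x a x' - Pte x a x'|)))) := by
  haveI : Nonempty Sφ := ⟨φ 0⟩
  have hγpos : (0:ℝ) < 1 - γ := by linarith
  have hVmax : 0 ≤ Vmax := by rw [hV]; positivity
  have hcγ : (0:ℝ) ≤ 1/(1-γ) := by positivity
  -- abstract value function
  set h : Sφ → ℝ := fun x => Finset.univ.sup' Finset.univ_nonempty fun a' => g x a'
    with hhdef
  have hg' : ∀ x a, g x a = rtr x a + γ * ∑ x', Ptr x a x' * h x' := hg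
  have hgB : ∀ x a, g x a ∈ Set.Icc (0:ℝ) Vmax :=
    g_bounds γ Rmax Vmax hγ0 hγ1 hR hV rtr hrtr Ptr hPtr0 hPtr1 g hg
  have hhB : ∀ x, h x ∈ Set.Icc (0:ℝ) Vmax := by
    intro x
    constructor
    · exact le_trans (hgB x (Classical.arbitrary 𝒜)).1
        (Finset.le_sup' _ (Finset.mem_univ _))
    · exact Finset.sup'_le _ _ fun a _ => (hgB x a).2
  set H : ℕ → ℝ := fun s => h (φ s) with hHdef
  set G : ℕ → 𝒜 → ℝ := fun s a => g (φ s) a with hGdef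
  have hHB : ∀ s, H s ∈ Set.Icc (0:ℝ) Vmax := fun s => hhB (φ s)
  have hGB : ∀ s a, G s a ∈ Set.Icc (0:ℝ) Vmax := fun s a => hgB (φ s) a
  have hGle : ∀ s a, G s a ≤ H s := fun s a =>
    Finset.le_sup' (fun a' => g (φ s) a') (Finset.mem_univ a)
  have hGeq : ∀ s, g (φ s) (πφ s) = H s := fun s =>
    le_antisymm (Finset.le_sup' _ (Finset.mem_univ _))
      (Finset.sup'_le _ _ fun a _ => hgreedy s a)
  -- up-projected transitions
  set q : ℕ → 𝒜 → Sφ → ℝ := fun s a x => ∑' j, if φ j = x then p s a j else 0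
    with hqdef
  have hqfold : ∀ s a x, (∑' j, if φ j = x then p s a j else 0) = q s a x :=
    fun _ _ _ => rfl
  have hq0 : ∀ s a x, 0 ≤ q s a x := fun s a x =>
    tsum_nonneg fun j => by by_cases hj : φ j = x <;> simp [hj, hp0 s a j]
  have hq1 : ∀ s a, ∑ x, q s a x = 1 := fun s a => fiber_sum_one φ (hp1 s a)
  have hPHdec : ∀ s a, (∑' s', p s a s' * H s') = ∑ x, q s a x * h x := fun s a =>
    fiber_tsum φ (p s a) (hp1 s a).summable h
  -- the error weight
  set w : ℕ → 𝒜 → ℝ := fun s a =>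
    |r s a - rte (φ s) a| + |rtr (φ s) a - rte (φ s) a|
      + γ/2 * Vmax * ∑ x, |q s a x - Pte (φ s) a x|
      + γ/2 * Vmax * ∑ x', |Ptr (φ s) a x' - Pte (φ s) a x'| with hwdef
  set Cw : ℝ := 2 * Rmax + 2 * (γ * Vmax) with hCw
  have babs : ∀ (u v : ℝ), u ∈ Set.Icc (0:ℝ) Rmax → v ∈ Set.Icc (0:ℝ) Rmax →
      |u - v| ≤ Rmax := by
    intro u v hu hv
    rw [abs_le]
    constructor <;> [linarith [hu.1, hv.2]; linarith [hu.2, hv.1]]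
  have b3 : ∀ s a, ∑ x, |q s a x - Pte (φ s) a x| ≤ 2 := by
    intro s a
    calc ∑ x, |q s a x - Pte (φ s) a x| ≤ ∑ x, (q s a x + Pte (φ s) a x) := by
          apply Finset.sum_le_sum; intro x _
          rw [abs_le]
          constructor <;>
            [linarith [hq0 s a x, hPte0 (φ s) a x]; linarith [hq0 s a x, hPte0 (φ s) a x]]
      _ = 2 := by rw [Finset.sum_add_distrib, hq1 s a, hPte1 (φ s) a]; norm_num
  have b4 : ∀ (x : Sφ) a, ∑ x', |Ptr x a x' - Pte x a x'| ≤ 2 := by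
    intro x a
    calc ∑ x', |Ptr x a x' - Pte x a x'| ≤ ∑ x', (Ptr x a x' + Pte x a x') := by
          apply Finset.sum_le_sum; intro x' _
          rw [abs_le]
          constructor <;>
            [linarith [hPtr0 x a x', hPte0 x a x']; linarith [hPtr0 x a x', hPte0 x a x']]
      _ = 2 := by rw [Finset.sum_add_distrib, hPtr1 x a, hPte1 x a]; norm_num
  have hwC : ∀ s a, w s a ≤ Cw := by
    intro s a
    have h1 := babs _ _ (hr s a) (hrte (φ s) a)
    have h2 := babs _ _ (hrtr (φ s) a) (hrte (φ s) a)
    have h3 : γ/2 * Vmax * ∑ x, |q s a x - Pte (φ s) a x| ≤ γ/2 * Vmax * 2 :=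
      mul_le_mul_of_nonneg_left (b3 s a) (by positivity)
    have h4 : γ/2 * Vmax * ∑ x', |Ptr (φ s) a x' - Pte (φ s) a x'|
        ≤ γ/2 * Vmax * 2 :=
      mul_le_mul_of_nonneg_left (b4 (φ s) a) (by positivity)
    rw [hwdef, hCw]
    have : γ/2 * Vmax * 2 = γ * Vmax := by ring
    rw [this] at h3 h4
    linarith
  -- pointwise error bound
  have hwΔ : ∀ s a, |r s a + γ * (∑' s', p s a s' * H s') - G s a| ≤ w s a := by
    intro s a
    rw [hPHdec s a]
    have hGexp : G s a = rtr (φ s) a + γ * ∑ x', Ptr (φ s) a x' * h x' :=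
      hg' (φ s) a
    have e1 : |(∑ x, q s a x * h x) - ∑ x, Pte (φ s) a x * h x|
        ≤ Vmax/2 * ∑ x, |q s a x - Pte (φ s) a x| :=
      row_bound_s15 Vmax _ _ h (hq1 s a) (hPte1 (φ s) a) hhB
    have e2 : |(∑ x, Pte (φ s) a x * h x) - ∑ x, Ptr (φ s) a x * h x|
        ≤ Vmax/2 * ∑ x', |Ptr (φ s) a x' - Pte (φ s) a x'| := by
      rw [abs_sub_comm]
      exact row_bound_s15 Vmax _ _ h (hPtr1 (φ s) a) (hPte1 (φ s) a) hhB
    rw [hGexp]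
    have expand : r s a + γ * (∑ x, q s a x * h x)
        - (rtr (φ s) a + γ * ∑ x', Ptr (φ s) a x' * h x')
      = (r s a - rte (φ s) a) - (rtr (φ s) a - rte (φ s) a)
        + γ * ((∑ x, q s a x * h x) - ∑ x, Pte (φ s) a x * h x)
        + γ * ((∑ x, Pte (φ s) a x * h x) - ∑ x, Ptr (φ s) a x * h x) := by ring
    rw [expand]
    have tri : ∀ A B C D' : ℝ, |A - B + C + D'| ≤ |A| + |B| + |C| + |D'| := by
      intro A B C D'
      calc |A - B + C + D'| ≤ |A - B + C| + |D'| := abs_add_le _ _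
        _ ≤ |A - B| + |C| + |D'| := by linarith [abs_add_le (A - B) C]
        _ ≤ |A| + |B| + |C| + |D'| := by linarith [abs_sub A B]
    apply le_trans (tri _ _ _ _)
    have h3 : |γ * ((∑ x, q s a x * h x) - ∑ x, Pte (φ s) a x * h x)|
        ≤ γ/2 * Vmax * ∑ x, |q s a x - Pte (φ s) a x| := by
      rw [abs_mul, abs_of_nonneg hγ0]
      calc γ * |(∑ x, q s a x * h x) - ∑ x, Pte (φ s) a x * h x|
          ≤ γ * (Vmax/2 * ∑ x, |q s a x - Pte (φ s) a x|) :=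
            mul_le_mul_of_nonneg_left e1 hγ0
        _ = γ/2 * Vmax * ∑ x, |q s a x - Pte (φ s) a x| := by ring
    have h4 : |γ * ((∑ x, Pte (φ s) a x * h x) - ∑ x, Ptr (φ s) a x * h x)|
        ≤ γ/2 * Vmax * ∑ x', |Ptr (φ s) a x' - Pte (φ s) a x'| := by
      rw [abs_mul, abs_of_nonneg hγ0]
      calc γ * |(∑ x, Pte (φ s) a x * h x) - ∑ x, Ptr (φ s) a x * h x|
          ≤ γ * (Vmax/2 * ∑ x', |Ptr (φ s) a x' - Pte (φ s) a x'|) :=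
            mul_le_mul_of_nonneg_left e2 hγ0
        _ = γ/2 * Vmax * ∑ x', |Ptr (φ s) a x' - Pte (φ s) a x'| := by ring
    rw [hwdef]
    linarith
  -- apply policy_both to π
  have hd00π : ∀ s, 0 ≤ dπ 0 s := by rw [hdπ0]; exact hd₀0
  have hd01π : HasSum (dπ 0) 1 := by rw [hdπ0]; exact hd₀1
  have Pπ := policy_both γ Rmax Vmax hγ0 hγ1 hR r hr p hp0 hp1 H hHB G hGB
    π hπ0 hπ1 dπ hd00π hd01π hdπrec Dπ hDπ w Cw hwΔ hwC
  have hup := Pπ.1 hGle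
  obtain ⟨hDπ0, hDπs⟩ := Pπ.2.2
  -- apply policy_both to πφ
  have hd00φ : ∀ s, 0 ≤ dφ 0 s := by rw [hdφ0]; exact hd₀0
  have hd01φ : HasSum (dφ 0) 1 := by rw [hdφ0]; exact hd₀1
  have hρφ0 : ∀ (s : ℕ) (a : 𝒜), 0 ≤ (if a = πφ s then (1:ℝ) else 0) := by
    intro s a; by_cases hsa : a = πφ s <;> simp [hsa]
  have hρφ1 : ∀ s : ℕ, ∑ a, (if a = πφ s then (1:ℝ) else 0) = 1 := by
    intro s; simp
  have hdrecφ : ∀ t s', dφ (t+1) s'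
      = ∑' s, dφ t s * ∑ a, (if a = πφ s then (1:ℝ) else 0) * p s a s' := by
    intro t s'
    rw [hdφrec t s']
    apply tsum_congr; intro s
    congr 1
    simp [ite_mul]
  have Pφ := policy_both γ Rmax Vmax hγ0 hγ1 hR r hr p hp0 hp1 H hHB G hGB
    (fun s a => if a = πφ s then (1:ℝ) else 0) hρφ0 hρφ1 dφ hd00φ hd01φ hdrecφ
    Dφ hDφ w Cw hwΔ hwC
  have hGeqρ : ∀ s : ℕ, ∑ a, (if a = πφ s then (1:ℝ) else 0) * G s a = H s := by
    intro s
    rw [show ∑ a, (if a = πφ s then (1:ℝ) else 0) * G s a = G s (πφ s) by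
      simp [ite_mul]]
    exact hGeq s
  have hlo := Pφ.2.1 hGeqρ
  obtain ⟨hDφ0, hDφs⟩ := Pφ.2.2
  -- convert the πφ objective
  have hJφ : ∑' t, γ^t * ∑' s, dφ t s *
        ∑ a, (if a = πφ s then (1:ℝ) else 0) * r s a
      = ∑' t, γ^t * ∑' s, dφ t s * r s (πφ s) := by
    apply tsum_congr; intro t
    congr 1
    apply tsum_congr; intro s
    congr 1
    simp [ite_mul]
  rw [hJφ] at hlo
  have hV0 : (∑' s, dπ 0 s * H s) = ∑' s, dφ 0 s * H s := by rw [hdπ0, hdφ0]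
  -- pairing decompositions
  have hBπ := pairing_decomp γ Rmax Vmax hγ0 hVmax hR φ r hr rtr rte hrtr hrte
    Ptr Pte hPtr0 hPtr1 hPte0 hPte1 q hq0 hq1 Dπ hDπ0 hDπs
  have hBφ := pairing_decomp γ Rmax Vmax hγ0 hVmax hR φ r hr rtr rte hrtr hrte
    Ptr Pte hPtr0 hPtr1 hPte0 hPte1 q hq0 hq1 Dφ hDφ0 hDφs
  have hwπ : (∑' s, ∑ a, Dπ s a * w s a)
      = ∑' s, ∑ a, Dπ s a * (|r s a - rte (φ s) a| + |rtr (φ s) a - rte (φ s) a|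
        + γ/2 * Vmax * ∑ x, |q s a x - Pte (φ s) a x|
        + γ/2 * Vmax * ∑ x', |Ptr (φ s) a x' - Pte (φ s) a x'|) := rfl
  have hwφ : (∑' s, ∑ a, Dφ s a * w s a)
      = ∑' s, ∑ a, Dφ s a * (|r s a - rte (φ s) a| + |rtr (φ s) a - rte (φ s) a|
        + γ/2 * Vmax * ∑ x, |q s a x - Pte (φ s) a x|
        + γ/2 * Vmax * ∑ x', |Ptr (φ s) a x' - Pte (φ s) a x'|) := rfl
  rw [hwπ, hBπ] at hup
  rw [hwφ, hBφ] at hlo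
  -- finish
  simp only [hqfold]
  set X1 := ((∑' s, ∑ a, Dπ s a * |r s a - rte (φ s) a|)
      + γ/2 * Vmax * (∑' s, ∑ a, Dπ s a * ∑ x, |q s a x - Pte (φ s) a x|))
    + ((∑ x, ∑ a, (∑' s, if φ s = x then Dπ s a else 0) * |rtr x a - rte x a|)
      + γ/2 * Vmax * (∑ x, ∑ a, (∑' s, if φ s = x then Dπ s a else 0) *
          ∑ x', |Ptr x a x' - Pte x a x'|)) with hX1
  set X2 := ((∑' s, ∑ a, Dφ s a * |r s a - rte (φ s) a|)
      + γ/2 * Vmax * (∑' s, ∑ a, Dφ s a * ∑ x, |q s a x - Pte (φ s) a x|))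
    + ((∑ x, ∑ a, (∑' s, if φ s = x then Dφ s a else 0) * |rtr x a - rte x a|)
      + γ/2 * Vmax * (∑ x, ∑ a, (∑' s, if φ s = x then Dφ s a else 0) *
          ∑ x', |Ptr x a x' - Pte x a x'|)) with hX2
  have hfin : (1/(1-γ)) * (X1 + X2) = (1/(1-γ)) * X1 + (1/(1-γ)) * X2 := by ring
  show _ ≤ (1/(1-γ)) * (X1 + X2)
  rw [hfin]
  linarith
end
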